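/- arXiv:0807.2233 — 5 statements merged into one kernel-verified Lean document; each statement's English description precedes it below -/
import Mathlib

section
/- Let X be a metric space, f : X → ℝ a measurable function (with respect to a Borel regular measure μ on X). Then for every measurable set E ⊆ X × ℝ, the projection onto X of the intersection of the graph of f with E, namely pr_X({(x, f(x)) : x ∈ X} ∩ E), is μ-measurable. -/
open MeasureTheory Metric Set ENNReal

/-- for a μ-measurable function f : X → ℝ (in the sense that f is squeezed
between two Borel functions agreeing μ-a.e.), the projection onto X of the intersection of
the graph of f with any Borel set E ⊆ X × ℝ is μ-measurable. -/
theorem stmt_4 {X : Type*} [MetricSpace X] [CompleteSpace X] [SecondCountableTopology X]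
    [MeasurableSpace X] [BorelSpace X]
    (μ : Measure X)
    (f : X → ℝ)
    (hf : ∃ fs fS : X → ℝ, Measurable fs ∧ Measurable fS ∧
      (∀ x, fs x ≤ f x) ∧ (∀ x, f x ≤ fS x) ∧ fs =ᵐ[μ] fS) :
    ∀ E : Set (X × ℝ), MeasurableSet E →
      NullMeasurableSet (Prod.fst '' ({p : X × ℝ | p.2 = f p.1} ∩ E)) μ := by
  obtain ⟨fs, fS, hms, hmS, hle1, hle2, hae⟩ := hf
  have hfae : AEMeasurable f μ := by
    refine ⟨fs, hms, ?_⟩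
    filter_upwards [hae] with x hx
    exact le_antisymm (le_trans (hx ▸ hle2 x) le_rfl) (hle1 x) |>.symm ▸ rfl
  intro E hE
  have himg : Prod.fst '' ({p : X × ℝ | p.2 = f p.1} ∩ E) = (fun x => (x, f x)) ⁻¹' E := by
    ext x
    constructor
    · rintro ⟨⟨a, b⟩, ⟨hgraph, hEmem⟩, rfl⟩
      simpa [show b = f a from hgraph] using hEmem
    · intro hx
      exact ⟨(x, f x), ⟨rfl, hx⟩, rfl⟩
  rw [himg]
  exact ((aemeasurable_id.prodMk hfae).nullMeasurable) hE
end

section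
/- Let X be a metric space with doubling measure μ (doubling constant C_μ, Q = log₂ C_μ) and let f : X → ℝ^m with 1 ≤ m ≤ Q. For a set Ξ ⊆ X × ℝ^m (a piece of the graph of f inside a ball), there is a constant C depending only on C_μ and m such that the Q-dimensional Hausdorff content satisfies H^Q_∞(Ξ) ≤ C · diam(Ξ)^m · H^{Q-m}_∞(pr_X(Ξ)), where pr_X is the projection to X. -/
open MeasureTheory Metric Set ENNReal

/-- The s-dimensional Hausdorff content of a set in an extended metric space. -/
noncomputable def hContent {Z : Type*} [EMetricSpace Z] (s : ℝ) (E : Set Z) : ℝ≥0∞ :=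
  ⨅ (U : ℕ → Set Z) (_ : E ⊆ ⋃ i, U i), ∑' i, EMetric.diam (U i) ^ s

/-- Injective reindexing of an `ℝ≥0∞` sum, provided the function vanishes off the range. -/
lemma tsum_comp_injective {α β : Type*} {f : α → ℝ≥0∞} {g : β → α}
    (hg : Function.Injective g) (hf : ∀ x ∉ Set.range g, f x = 0) :
    ∑' y, f (g y) = ∑' x, f x :=
  ((hg.hasSum_iff hf).2 ENNReal.summable.hasSum).tsum_eq

/-- A covering indexed by any countable type gives an upper bound for Hausdorff content. -/
lemma hContent_le_of_cover {Z : Type*} [EMetricSpace Z] {ι : Type*} [Countable ι]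
    {s : ℝ} (hs : 0 < s) {E : Set Z} (W : ι → Set Z) (hcov : E ⊆ ⋃ i, W i) :
    hContent s E ≤ ∑' i, EMetric.diam (W i) ^ s := by
  obtain ⟨g, hg⟩ := Countable.exists_injective_nat ι
  set U : ℕ → Set Z := fun n => ⋃ (i : ι) (_ : g i = n), W i with hUdef
  have hUg : ∀ i, U (g i) = W i := by
    intro i
    apply Subset.antisymm
    · intro z hz
      simp only [hUdef, mem_iUnion] at hz
      obtain ⟨j, hj, hzj⟩ := hz
      rwa [hg hj] at hzj
    · intro z hz
      simp only [hUdef, mem_iUnion]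
      exact ⟨i, rfl, hz⟩
  have hcov' : E ⊆ ⋃ n, U n := by
    intro z hz
    obtain ⟨i, hi⟩ := mem_iUnion.1 (hcov hz)
    exact mem_iUnion.2 ⟨g i, (hUg i).symm ▸ hi⟩
  have h1 : hContent s E ≤ ∑' n, EMetric.diam (U n) ^ s := by
    simp only [hContent]
    exact iInf₂_le U hcov'
  have h2 : ∑' n, EMetric.diam (U n) ^ s = ∑' i, EMetric.diam (W i) ^ s := by
    rw [← tsum_comp_injective (f := fun n => EMetric.diam (U n) ^ s) hg ?_]
    · exact tsum_congr fun i => by rw [hUg i]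
    · intro n hn
      have : U n = ∅ := by
        apply eq_empty_iff_forall_notMem.2
        intro z hz
        simp only [hUdef, mem_iUnion] at hz
        obtain ⟨j, hj, _⟩ := hz
        exact hn ⟨j, hj⟩
      simp only [this, EMetric.diam, Metric.ediam_empty, ENNReal.zero_rpow_of_pos hs]
  rw [← h2]; exact h1

/-- for a doubling metric measure space X of dimension Q = log₂ C_μ,
f : X → ℝ^m with 1 ≤ m ≤ Q, and any bounded piece Ξ of the graph of f, one has
H^Q_∞(Ξ) ≤ C · diam(Ξ)^m · H^{Q-m}_∞(pr_X(Ξ)) with C depending only on C_μ and m. -/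
theorem stmt_5 {X : Type*} [MetricSpace X] [MeasurableSpace X]
    (μ : Measure X)
    (hpos : ∀ (x : X) (r : ℝ), 0 < r → 0 < μ (ball x r) ∧ μ (ball x r) < ∞)
    (Cμ : ℝ) (hCμ : 1 ≤ Cμ)
    (hdoub : ∀ (x : X) (r : ℝ), 0 < r →
      μ (ball x (2 * r)) ≤ ENNReal.ofReal Cμ * μ (ball x r))
    (m : ℕ) (hm1 : 1 ≤ m) (hmQ : (m : ℝ) ≤ Real.logb 2 Cμ) :
    ∃ C : ℝ≥0∞, 0 < C ∧ C ≠ ∞ ∧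
      ∀ (f : X → (Fin m → ℝ)) (Ξ : Set (X × (Fin m → ℝ))),
        Ξ ⊆ {p : X × (Fin m → ℝ) | p.2 = f p.1} → EMetric.diam Ξ ≠ ∞ →
        hContent (Real.logb 2 Cμ) Ξ ≤
          C * EMetric.diam Ξ ^ (m : ℝ) *
            hContent (Real.logb 2 Cμ - m) (Prod.fst '' Ξ) := by
  set Q : ℝ := Real.logb 2 Cμ with hQdef
  have hm0 : (0:ℝ) < m := by exact_mod_cast hm1
  have hQ0 : 0 < Q := lt_of_lt_of_le hm0 hmQ
  have hQm0 : (0:ℝ) ≤ Q - m := sub_nonneg.2 hmQ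
  refine ⟨(3 : ℝ≥0∞) ^ (m : ℝ), ENNReal.rpow_pos (by norm_num) (by norm_num),
    ENNReal.rpow_ne_top_of_nonneg (by positivity) (by norm_num), ?_⟩
  intro f Ξ hgraph hdiam
  rcases eq_or_ne (EMetric.diam Ξ) 0 with h0 | h0
  · -- degenerate case: Ξ is a subsingleton, LHS = 0
    have : hContent Q Ξ ≤ ∑' _ : Unit, EMetric.diam Ξ ^ Q :=
      hContent_le_of_cover hQ0 (fun _ : Unit => Ξ) (by intro z hz; exact mem_iUnion.2 ⟨(), hz⟩)
    rw [tsum_eq_single () (fun b hb => absurd (Subsingleton.elim b ()) hb)] at this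
    rw [h0, ENNReal.zero_rpow_of_pos hQ0] at this
    exact le_trans this zero_le
  · -- main case
    have hΞne : Ξ.Nonempty := by
      by_contra h
      rw [not_nonempty_iff_eq_empty.1 h] at h0
      exact h0 Metric.ediam_empty
    obtain ⟨p₀, hp₀⟩ := hΞne
    set D : ℝ := (EMetric.diam Ξ).toReal with hDdef
    have hD0 : 0 < D := ENNReal.toReal_pos h0 hdiam
    have hDeq : ENNReal.ofReal D = EMetric.diam Ξ := ENNReal.ofReal_toReal hdiam
    set K : ℝ≥0∞ := (3 : ℝ≥0∞) ^ (m : ℝ) * EMetric.diam Ξ ^ (m : ℝ) with hKdef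
    have hK0 : K ≠ 0 := by
      apply mul_ne_zero
      · exact (ENNReal.rpow_pos (by norm_num) (by norm_num)).ne'
      · exact (ENNReal.rpow_pos (pos_iff_ne_zero.2 h0) hdiam).ne'
    have hKtop : K ≠ ∞ := by
      apply ENNReal.mul_ne_top
      · exact ENNReal.rpow_ne_top_of_nonneg (by positivity) (by norm_num)
      · exact ENNReal.rpow_ne_top_of_nonneg (by positivity) hdiam
    show hContent Q Ξ ≤ K * hContent (Q - m) (Prod.fst '' Ξ)
    -- reduce to a fixed covering of the projection
    conv_rhs => rw [hContent, ENNReal.mul_iInf_of_ne hK0 hKtop]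
    refine le_iInf fun U => ?_
    rw [ENNReal.mul_iInf_of_ne hK0 hKtop]
    refine le_iInf fun hU => ?_
    -- the covering of Ξ by cylinders cut into cubes
    set A : Set X := Prod.fst '' Ξ with hAdef
    set U' : ℕ → Set X := fun i => U i ∩ A with hU'def
    have hdiamA : EMetric.diam A ≤ EMetric.diam Ξ := by
      have := (LipschitzWith.prod_fst (α := X) (β := Fin m → ℝ)).ediam_image_le Ξ
      simpa [EMetric.diam] using this
    have hU'le : ∀ i, EMetric.diam (U' i) ≤ EMetric.diam Ξ :=
      fun i => le_trans (EMetric.diam_mono (inter_subset_right)) hdiamA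
    have hU'ne : ∀ i, EMetric.diam (U' i) ≠ ∞ := fun i => ne_top_of_le_ne_top hdiam (hU'le i)
    set d : ℕ → ℝ := fun i => (EMetric.diam (U' i)).toReal with hddef
    have hd0 : ∀ i, 0 ≤ d i := fun i => ENNReal.toReal_nonneg
    have hdD : ∀ i, d i ≤ D := fun i => ENNReal.toReal_mono hdiam (hU'le i)
    have hdeq : ∀ i, ENNReal.ofReal (d i) = EMetric.diam (U' i) :=
      fun i => ENNReal.ofReal_toReal (hU'ne i)
    set n : ℕ → ℕ := fun i => ⌊2 * D / d i⌋₊ + 1 with hndef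
    set S : ℕ → (Fin m → ℕ) → Set (Fin m → ℝ) := fun i c =>
      if EMetric.diam (U' i) = 0 then univ else
        univ.pi fun j => Icc (p₀.2 j - D + d i * c j) (p₀.2 j - D + d i * c j + d i) with hSdef
    set W : ℕ × (Fin m → ℕ) → Set (X × (Fin m → ℝ)) := fun q =>
      if ∀ j, q.2 j < n q.1 then (U' q.1 ×ˢ S q.1 q.2) ∩ Ξ else ∅ with hWdef
    -- coverage
    have hcov : Ξ ⊆ ⋃ q, W q := by
      intro p hp
      have hpA : p.1 ∈ A := ⟨p, hp, rfl⟩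
      obtain ⟨i, hi⟩ := mem_iUnion.1 (hU hpA)
      have hpU' : p.1 ∈ U' i := ⟨hi, hpA⟩
      rcases eq_or_ne (EMetric.diam (U' i)) 0 with hdi | hdi
      · refine mem_iUnion.2 ⟨(i, fun _ => 0), ?_⟩
        have hvalid : ∀ j : Fin m, (0:ℕ) < n i := fun _ => Nat.succ_pos _
        simp only [hWdef, if_pos hvalid]
        refine ⟨⟨hpU', ?_⟩, hp⟩
        simp [hSdef, hdi]
      · have hdipos : 0 < d i := ENNReal.toReal_pos hdi (hU'ne i)
        -- the second coordinate is within D of p₀.2 in each coordinate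
        have hdist : ∀ j, dist (p.2 j) (p₀.2 j) ≤ D := by
          intro j
          have h1 : edist (p.2 j) (p₀.2 j) ≤ edist p.2 p₀.2 := edist_le_pi_edist _ _ j
          have h2 : edist p.2 p₀.2 ≤ edist p p₀ := by
            rw [Prod.edist_eq]; exact le_max_right _ _
          have h3 : edist p p₀ ≤ EMetric.diam Ξ := EMetric.edist_le_diam_of_mem hp hp₀
          have h4 : edist (p.2 j) (p₀.2 j) ≤ ENNReal.ofReal D := by
            rw [hDeq]; exact le_trans h1 (le_trans h2 h3)
          rw [edist_dist] at h4
          exact (ENNReal.ofReal_le_ofReal_iff hD0.le).1 h4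
        set c : Fin m → ℕ := fun j => ⌊(p.2 j - (p₀.2 j - D)) / d i⌋₊ with hcdef
        have habs : ∀ j, |p.2 j - p₀.2 j| ≤ D := by
          intro j
          rw [← Real.dist_eq]
          exact hdist j
        have ht0 : ∀ j, 0 ≤ p.2 j - (p₀.2 j - D) := by
          intro j
          have := (abs_le.1 (habs j)).1
          linarith
        have ht2 : ∀ j, p.2 j - (p₀.2 j - D) ≤ 2 * D := by
          intro j
          have := (abs_le.1 (habs j)).2
          linarith
        have hvalid : ∀ j, c j < n i := by
          intro j
          have hdivle : (p.2 j - (p₀.2 j - D)) / d i ≤ 2 * D / d i := by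
            gcongr
            exact ht2 j
          exact Nat.lt_succ_of_le (Nat.floor_mono hdivle)
        refine mem_iUnion.2 ⟨(i, c), ?_⟩
        simp only [hWdef, if_pos hvalid]
        refine ⟨⟨hpU', ?_⟩, hp⟩
        simp only [hSdef, if_neg hdi, mem_pi, mem_univ, forall_true_left]
        intro j
        rw [mem_Icc]
        have hfl : (c j : ℝ) ≤ (p.2 j - (p₀.2 j - D)) / d i :=
          Nat.floor_le (div_nonneg (ht0 j) hdipos.le)
        have hfu : (p.2 j - (p₀.2 j - D)) / d i < (c j : ℝ) + 1 := Nat.lt_floor_add_one _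
        have hlo : (c j : ℝ) * d i ≤ p.2 j - (p₀.2 j - D) := (le_div_iff₀ hdipos).1 hfl
        have hhi : p.2 j - (p₀.2 j - D) < ((c j : ℝ) + 1) * d i := (div_lt_iff₀ hdipos).1 hfu
        constructor
        · nlinarith
        · nlinarith
    -- diameter of each piece
    have hdiamW : ∀ q : ℕ × (Fin m → ℕ),
        EMetric.diam (W q) ^ Q ≤
          (if ∀ j, q.2 j < n q.1 then EMetric.diam (U' q.1) ^ Q else 0) := by
      rintro ⟨i, c⟩
      by_cases hc : ∀ j, c j < n i
      · simp only [hWdef, if_pos hc]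
        apply ENNReal.rpow_le_rpow _ hQ0.le
        rcases eq_or_ne (EMetric.diam (U' i)) 0 with hdi | hdi
        · rw [hdi]
          apply EMetric.diam_le
          rintro x ⟨⟨hx1, _⟩, hxΞ⟩ y ⟨⟨hy1, _⟩, hyΞ⟩
          have hxy1 : x.1 = y.1 := by
            have := EMetric.edist_le_diam_of_mem hx1 hy1
            rw [show Metric.ediam (U' i) = 0 from hdi, le_zero_iff] at this
            exact edist_eq_zero.1 this
          have hx2 : x.2 = f x.1 := hgraph hxΞ
          have hy2 : y.2 = f y.1 := hgraph hyΞ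
          have : x = y := Prod.ext hxy1 (by rw [hx2, hy2, hxy1])
          simp [this]
        · apply EMetric.diam_le
          rintro x ⟨⟨hx1, hx2⟩, _⟩ y ⟨⟨hy1, hy2⟩, _⟩
          rw [Prod.edist_eq, max_le_iff]
          constructor
          · exact EMetric.edist_le_diam_of_mem hx1 hy1
          · rw [← hdeq i, edist_dist, ENNReal.ofReal_le_ofReal_iff (hd0 i)]
            rw [dist_pi_le_iff (hd0 i)]
            intro j
            simp only [hSdef, if_neg hdi, mem_pi, mem_univ, forall_true_left] at hx2 hy2
            have := Real.dist_le_of_mem_Icc (hx2 j) (hy2 j)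
            simpa using this
      · simp [hWdef, if_neg hc, EMetric.diam, hQ0, ENNReal.zero_rpow_of_pos hQ0]
    -- sum over cubes for a fixed i
    have hsum_i : ∀ i : ℕ,
        (∑' c : Fin m → ℕ, (if ∀ j, c j < n i then EMetric.diam (U' i) ^ Q else 0))
          = (n i ^ m : ℕ) * EMetric.diam (U' i) ^ Q := by
      intro i
      classical
      have : (∑' c : Fin m → ℕ, (if ∀ j, c j < n i then EMetric.diam (U' i) ^ Q else 0))
          = ∑ c ∈ Fintype.piFinset (fun _ : Fin m => Finset.range (n i)),
              (if ∀ j, c j < n i then EMetric.diam (U' i) ^ Q else 0) := by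
        apply tsum_eq_sum
        intro c hc
        rw [if_neg]
        intro hcall
        exact hc (Fintype.mem_piFinset.2 fun j => Finset.mem_range.2 (hcall j))
      rw [this, Finset.sum_congr rfl (fun c hc => if_pos fun j =>
        Finset.mem_range.1 (Fintype.mem_piFinset.1 hc j)), Finset.sum_const]
      rw [Fintype.card_piFinset]
      simp [Finset.card_range, nsmul_eq_mul]
    -- the per-index estimate
    have hest : ∀ i : ℕ,
        (n i ^ m : ℕ) * EMetric.diam (U' i) ^ Q ≤ K * EMetric.diam (U i) ^ (Q - (m:ℝ)) := by
      intro i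
      rcases eq_or_ne (EMetric.diam (U' i)) 0 with hdi | hdi
      · rw [hdi, ENNReal.zero_rpow_of_pos hQ0, mul_zero]
        exact zero_le
      · have hdipos : 0 < d i := ENNReal.toReal_pos hdi (hU'ne i)
        have hsplit : EMetric.diam (U' i) ^ Q
            = EMetric.diam (U' i) ^ (m:ℝ) * EMetric.diam (U' i) ^ (Q - (m:ℝ)) := by
          rw [← ENNReal.rpow_add _ _ hdi (hU'ne i)]
          ring_nf
        rw [hsplit, ← mul_assoc]
        have h1 : (n i ^ m : ℕ) * EMetric.diam (U' i) ^ (m:ℝ)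
            ≤ (3:ℝ≥0∞) ^ (m:ℝ) * EMetric.diam Ξ ^ (m:ℝ) := by
          have hcast : ((n i ^ m : ℕ) : ℝ≥0∞) = ((n i : ℝ≥0∞)) ^ (m:ℝ) := by
            rw [ENNReal.rpow_natCast]
            push_cast
            ring
          rw [hcast, ← ENNReal.mul_rpow_of_nonneg _ _ hm0.le]
          have h2 : (n i : ℝ≥0∞) * EMetric.diam (U' i) ≤ ENNReal.ofReal (3 * D) := by
            rw [← hdeq i, ← ENNReal.ofReal_natCast, ← ENNReal.ofReal_mul (by positivity)]
            apply ENNReal.ofReal_le_ofReal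
            have hn_le : (n i : ℝ) ≤ 2 * D / d i + 1 := by
              simp only [hndef]
              push_cast
              have := Nat.floor_le (a := 2 * D / d i) (by positivity)
              linarith
            have : (n i : ℝ) * d i ≤ (2 * D / d i + 1) * d i :=
              mul_le_mul_of_nonneg_right hn_le hdipos.le
            calc (n i : ℝ) * d i ≤ (2 * D / d i + 1) * d i := this
              _ = 2 * D + d i := by field_simp
              _ ≤ 3 * D := by linarith [hdD i]
          calc ((n i : ℝ≥0∞) * EMetric.diam (U' i)) ^ (m:ℝ)
              ≤ (ENNReal.ofReal (3 * D)) ^ (m:ℝ) := ENNReal.rpow_le_rpow h2 hm0.le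
            _ = (3:ℝ≥0∞) ^ (m:ℝ) * EMetric.diam Ξ ^ (m:ℝ) := by
                rw [ENNReal.ofReal_mul (by norm_num), ← hDeq,
                  ENNReal.mul_rpow_of_nonneg _ _ hm0.le]
                norm_num
        have h3 : EMetric.diam (U' i) ^ (Q - (m:ℝ)) ≤ EMetric.diam (U i) ^ (Q - (m:ℝ)) :=
          ENNReal.rpow_le_rpow (EMetric.diam_mono inter_subset_left) hQm0
        exact mul_le_mul h1 h3 zero_le zero_le
    -- put everything together
    calc hContent Q Ξ ≤ ∑' q : ℕ × (Fin m → ℕ), EMetric.diam (W q) ^ Q :=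
          hContent_le_of_cover hQ0 W hcov
      _ = ∑' (i : ℕ) (c : Fin m → ℕ), EMetric.diam (W (i, c)) ^ Q := ENNReal.tsum_prod'
      _ ≤ ∑' (i : ℕ), (n i ^ m : ℕ) * EMetric.diam (U' i) ^ Q := by
          apply ENNReal.tsum_le_tsum
          intro i
          rw [← hsum_i i]
          exact ENNReal.tsum_le_tsum fun c => hdiamW (i, c)
      _ ≤ ∑' (i : ℕ), K * EMetric.diam (U i) ^ (Q - (m:ℝ)) := ENNReal.tsum_le_tsum hest
      _ = K * ∑' (i : ℕ), EMetric.diam (U i) ^ (Q - (m:ℝ)) := ENNReal.tsum_mul_left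
end

section
/- Let X be a complete doubling metric measure space (dimension Q = log₂ C_μ) and f : X → ℝ^m measurable with 1 ≤ m ≤ Q. Suppose there exists Φ ∈ L¹_loc(X) such that for every z ∈ X × ℝ^m and 0 < r < diam(X)/4, H^{Q-m}_∞(pr_X(G_f(X) ∩ B(z,r))) ≤ diam(G_f(X) ∩ B(z,r))^{-m} · ∫_{pr_X(G_f(X) ∩ B(z,4r))} Φ dμ. Then there is a constant C depending only on C_μ and m such that H^Q(f̄(E)) ≤ C ∫_E Φ dμ for every μ-measurable set E ⊆ X, where f̄(x) = (x, f(x)). In particular, the graph mapping f̄ satisfies Luzin's condition (N_Q): μ(E) = 0 implies H^Q(f̄(E)) = 0. -/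
open MeasureTheory Metric Set ENNReal

lemma doub_pow {X : Type*} [MetricSpace X] [MeasurableSpace X]
    (μ : Measure X) (Cμ : ℝ)
    (hdoub : ∀ (x : X) (r : ℝ), 0 < r →
      μ (ball x (2 * r)) ≤ ENNReal.ofReal Cμ * μ (ball x r))
    (x : X) (r : ℝ) (hr : 0 < r) : ∀ k : ℕ,
    μ (ball x (2 ^ k * r)) ≤ (ENNReal.ofReal Cμ) ^ k * μ (ball x r) := by
  intro k
  induction k with
  | zero => simp
  | succ n ih =>
      have h2 : (2:ℝ) ^ (n+1) * r = 2 * (2 ^ n * r) := by ring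
      have hpos : (0:ℝ) < 2 ^ n * r := by positivity
      calc μ (ball x (2 ^ (n+1) * r)) = μ (ball x (2 * (2 ^ n * r))) := by rw [h2]
        _ ≤ ENNReal.ofReal Cμ * μ (ball x (2 ^ n * r)) := hdoub x _ hpos
        _ ≤ ENNReal.ofReal Cμ * ((ENNReal.ofReal Cμ) ^ n * μ (ball x r)) := by
            exact mul_le_mul_right ih _
        _ = (ENNReal.ofReal Cμ) ^ (n+1) * μ (ball x r) := by ring

lemma properSpace_of_doubling {X : Type*} [MetricSpace X] [CompleteSpace X] [MeasurableSpace X] [BorelSpace X]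
    (μ : Measure X)
    (hpos : ∀ (x : X) (r : ℝ), 0 < r → 0 < μ (ball x r) ∧ μ (ball x r) < ∞)
    (Cμ : ℝ)
    (hdoub : ∀ (x : X) (r : ℝ), 0 < r →
      μ (ball x (2 * r)) ≤ ENNReal.ofReal Cμ * μ (ball x r)) :
    ProperSpace X := by
  refine ⟨fun x R => ?_⟩
  rcases le_or_gt R 0 with hR | hR
  · have hsub : closedBall x R ⊆ {x} := by
      intro w hw
      have : dist w x ≤ R := mem_closedBall.1 hw
      have : dist w x = 0 := le_antisymm (by linarith) dist_nonneg
      simp [dist_eq_zero.1 this]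
    exact ((Set.finite_singleton x).subset hsub).isCompact
  refine TotallyBounded.isCompact_of_isClosed ?_ Metric.isClosed_closedBall
  rw [Metric.totallyBounded_iff]
  intro ε hε
  by_contra hcov
  push_neg at hcov
  -- greedy construction of an ε-separated sequence in the closed ball
  have step : ∀ A : Finset X, ∃ a, a ∈ closedBall x R ∧ ∀ y ∈ A, ε ≤ dist a y := by
    intro A
    have := hcov A A.finite_toSet
    rw [Set.not_subset] at this
    obtain ⟨a, ha, hnot⟩ := this
    refine ⟨a, ha, fun y hy => ?_⟩
    by_contra hlt
    push_neg at hlt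
    exact hnot (Set.mem_biUnion (by exact_mod_cast hy) (mem_ball.2 (by
      rw [dist_comm] at hlt ⊢; exact hlt)))
  classical
  let F : ℕ → Finset X := fun n => Nat.rec ∅ (fun _ A => insert (step A).choose A) n
  let u : ℕ → X := fun n => (step (F n)).choose
  have hFsucc : ∀ n, F (n+1) = insert (u n) (F n) := fun n => rfl
  have hu_mem : ∀ n, u n ∈ closedBall x R := fun n => (step (F n)).choose_spec.1
  have hu_sep' : ∀ n, ∀ y ∈ F n, ε ≤ dist (u n) y := fun n => (step (F n)).choose_spec.2
  have hmemF : ∀ i n, i < n → u i ∈ F n := by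
    intro i n
    induction n with
    | zero => omega
    | succ k ih =>
        intro hik
        rw [hFsucc]
        rcases Nat.lt_or_ge i k with h | h
        · exact Finset.mem_insert_of_mem (ih h)
        · have : i = k := by omega
          subst this; exact Finset.mem_insert_self _ _
  have hsep : ∀ i j, i < j → ε ≤ dist (u j) (u i) := fun i j hij =>
    hu_sep' j _ (hmemF i j hij)
  -- measure contradiction
  set Cμ' := ENNReal.ofReal Cμ with hCμ'
  have hCμ'top : Cμ' ≠ ∞ := ENNReal.ofReal_ne_top
  obtain ⟨K, hK⟩ := pow_unbounded_of_one_lt ((2*R+1)/(ε/2)) (one_lt_two (α := ℝ))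
  have hKR : 2*R + 1 ≤ 2 ^ K * (ε/2) := by
    rw [div_lt_iff₀ (by positivity)] at hK
    nlinarith
  have hball : ∀ i : ℕ, μ (ball x (R+1)) ≤ Cμ' ^ K * μ (ball (u i) (ε/2)) := by
    intro i
    have hsub : ball x (R+1) ⊆ ball (u i) (2 ^ K * (ε/2)) := by
      intro w hw
      rw [mem_ball] at hw ⊢
      have h1 : dist x (u i) ≤ R := by
        rw [dist_comm]; exact mem_closedBall.1 (hu_mem i)
      calc dist w (u i) ≤ dist w x + dist x (u i) := dist_triangle _ _ _
        _ < (R+1) + R := by linarith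
        _ ≤ 2 ^ K * (ε/2) := by linarith
    calc μ (ball x (R+1)) ≤ μ (ball (u i) (2 ^ K * (ε/2))) := measure_mono hsub
      _ ≤ Cμ' ^ K * μ (ball (u i) (ε/2)) := doub_pow μ Cμ hdoub _ _ (by positivity) K
  have hdisj : ∀ N : ℕ, (↑(Finset.range N) : Set ℕ).PairwiseDisjoint
      (fun i => ball (u i) (ε/2)) := by
    intro N i _ j _ hij
    have : ε ≤ dist (u i) (u j) := by
      rcases Nat.lt_or_ge i j with h | h
      · rw [dist_comm]; exact hsep i j h
      · exact hsep j i (by omega)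
    exact ball_disjoint_ball (by linarith)
  have hsum : ∀ N : ℕ, (N : ℝ≥0∞) * μ (ball x (R+1)) ≤ Cμ' ^ K * μ (ball x (R+ε)) := by
    intro N
    have h1 : (N : ℝ≥0∞) * μ (ball x (R+1)) = ∑ _i ∈ Finset.range N, μ (ball x (R+1)) := by
      simp [Finset.sum_const, nsmul_eq_mul]
    rw [h1]
    calc ∑ i ∈ Finset.range N, μ (ball x (R+1))
        ≤ ∑ i ∈ Finset.range N, Cμ' ^ K * μ (ball (u i) (ε/2)) :=
          Finset.sum_le_sum (fun i _ => hball i)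
      _ = Cμ' ^ K * ∑ i ∈ Finset.range N, μ (ball (u i) (ε/2)) := by
          rw [Finset.mul_sum]
      _ = Cμ' ^ K * μ (⋃ i ∈ Finset.range N, ball (u i) (ε/2)) := by
          rw [measure_biUnion_finset (hdisj N) (fun i _ => measurableSet_ball)]
      _ ≤ Cμ' ^ K * μ (ball x (R+ε)) := by
          refine mul_le_mul_right (measure_mono ?_) _
          refine Set.iUnion₂_subset fun i _ => fun w hw => ?_
          rw [mem_ball] at hw ⊢
          have h1 : dist (u i) x ≤ R := mem_closedBall.1 (hu_mem i)
          calc dist w x ≤ dist w (u i) + dist (u i) x := dist_triangle _ _ _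
            _ < ε/2 + R := by linarith
            _ ≤ R + ε := by linarith
  set a := μ (ball x (R+1)) with ha
  have ha0 : a ≠ 0 := (hpos x (R+1) (by linarith)).1.ne'
  have hatop : a ≠ ∞ := (hpos x (R+1) (by linarith)).2.ne
  set T := Cμ' ^ K * μ (ball x (R+ε)) with hT
  have hTtop : T ≠ ∞ :=
    ENNReal.mul_ne_top (pow_ne_top hCμ'top) (hpos x (R+ε) (by linarith)).2.ne
  have hTa : T / a ≠ ∞ := by
    exact (ENNReal.div_lt_top hTtop ha0).ne
  obtain ⟨N, hN⟩ := ENNReal.exists_nat_gt hTa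
  have : (N : ℝ≥0∞) ≤ T / a :=
    (ENNReal.le_div_iff_mul_le (Or.inl ha0) (Or.inl hatop)).2 (hsum N)
  exact absurd this (not_le.2 hN)

lemma reindex_cover {P : Type*} [EMetricSpace P] {ι : Type*} [Countable ι]
    (S : ι → Set P) (Q : ℝ) (hQ : 0 < Q) (r : ℝ≥0∞) (hd : ∀ i, EMetric.diam (S i) ≤ r) :
    ∃ T : ℕ → Set P, (⋃ i, S i) ⊆ (⋃ n, T n) ∧ (∀ n, EMetric.diam (T n) ≤ r) ∧
      ∑' n, EMetric.diam (T n) ^ Q ≤ ∑' i, EMetric.diam (S i) ^ Q := by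
  classical
  obtain ⟨e, he⟩ := Countable.exists_injective_nat ι
  set T : ℕ → Set P := fun n => ⋃ (i : ι) (_ : e i = n), S i with hTdef
  have hTe : ∀ i, T (e i) = S i := by
    intro i
    apply Set.Subset.antisymm
    · refine Set.iUnion₂_subset fun j hj => ?_
      have : j = i := he hj
      subst this; exact subset_rfl
    · exact fun w hw => Set.mem_iUnion₂.2 ⟨i, rfl, hw⟩
  have hTform : ∀ n, (∃ i, e i = n) ∨ T n = ∅ := by
    intro n
    by_cases hn : ∃ i, e i = n
    · exact Or.inl hn
    · refine Or.inr ?_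
      push_neg at hn
      simp only [hTdef]
      ext w; simp only [Set.mem_iUnion, Set.mem_empty_iff_false, iff_false, not_exists]
      intro i hi
      exact (hn i hi).elim
  refine ⟨T, ?_, ?_, ?_⟩
  · refine Set.iUnion_subset fun i => ?_
    intro w hw
    exact Set.mem_iUnion.2 ⟨e i, (hTe i).symm ▸ hw⟩
  · intro n
    rcases hTform n with ⟨i, hi⟩ | hempty
    · rw [← hi, hTe]; exact hd i
    · rw [hempty]; simp [EMetric.diam]
  · have hsupp : Function.support (fun n => EMetric.diam (T n) ^ Q) ⊆ Set.range e := by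
      intro n hn
      rcases hTform n with ⟨i, hi⟩ | hempty
      · exact ⟨i, hi⟩
      · exfalso
        apply hn
        simp only [hempty, EMetric.diam, EMetric.diam_empty]
        exact ENNReal.zero_rpow_of_pos hQ
    have := Function.Injective.tsum_eq he (f := fun n => EMetric.diam (T n) ^ Q) hsupp
    rw [← this]
    refine le_of_eq (tsum_congr fun i => ?_)
    simp only [hTe i]


lemma graph_proj_eq {X : Type*} [MetricSpace X] (m : ℕ) (f : X → (Fin m → ℝ))
    (z : X × (Fin m → ℝ)) (r : ℝ) :
    Prod.fst '' ({p : X × (Fin m → ℝ) | p.2 = f p.1} ∩ ball z r) =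
      ball z.1 r ∩ f ⁻¹' (ball z.2 r) := by
  ext x
  constructor
  · rintro ⟨p, ⟨hp, hpb⟩, rfl⟩
    rw [mem_ball, Prod.dist_eq, sup_lt_iff] at hpb
    exact ⟨mem_ball.2 hpb.1, by rw [Set.mem_preimage, mem_ball, ← hp]; exact hpb.2⟩
  · rintro ⟨h1, h2⟩
    refine ⟨(x, f x), ⟨rfl, ?_⟩, rfl⟩
    rw [mem_ball, Prod.dist_eq, sup_lt_iff]
    exact ⟨mem_ball.1 h1, mem_ball.1 h2⟩

lemma local_cover {X : Type*} [MetricSpace X] [SecondCountableTopology X]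
    [MeasurableSpace X] [BorelSpace X]
    (μ : Measure X) (Cμ : ℝ) (m : ℕ) (hm1 : 1 ≤ m) (hmQ : (m : ℝ) ≤ Real.logb 2 Cμ)
    (f : X → (Fin m → ℝ)) (Φ : X → ℝ≥0∞)
    (hyp : ∀ (z : X × (Fin m → ℝ)) (r : ℝ), 0 < r →
      ENNReal.ofReal (4 * r) < EMetric.diam (Set.univ : Set X) →
      hContent (Real.logb 2 Cμ - m)
          (Prod.fst '' ({p : X × (Fin m → ℝ) | p.2 = f p.1} ∩ ball z r)) ≤
        (∫⁻ x in Prod.fst '' ({p : X × (Fin m → ℝ) | p.2 = f p.1} ∩ ball z (4 * r)),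
            Φ x ∂μ) /
          EMetric.diam ({p : X × (Fin m → ℝ) | p.2 = f p.1} ∩ ball z r) ^ (m : ℝ))
    (z : X × (Fin m → ℝ)) (t : ℝ) (ht : 0 < t)
    (htD : ENNReal.ofReal (4 * t) < EMetric.diam (Set.univ : Set X))
    (ε : ℝ≥0∞) (hε : 0 < ε) :
    ∃ T : ℕ → Set (X × (Fin m → ℝ)),
      ({p : X × (Fin m → ℝ) | p.2 = f p.1} ∩ ball z t ⊆ ⋃ n, T n) ∧
      (∀ n, EMetric.diam (T n) ≤ ENNReal.ofReal (2 * t)) ∧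
      ∑' n, EMetric.diam (T n) ^ (Real.logb 2 Cμ) ≤
        (7 : ℝ≥0∞) ^ (m : ℝ) *
          ((∫⁻ x in ball z.1 (4*t) ∩ f ⁻¹' (ball z.2 (4*t)), Φ x ∂μ) + ε) := by
  classical
  set Q : ℝ := Real.logb 2 Cμ with hQdef
  set s : ℝ := Q - m with hsdef
  have hQpos : (0:ℝ) < Q := lt_of_lt_of_le (by exact_mod_cast hm1) hmQ
  have hs0 : (0:ℝ) ≤ s := by simp only [hsdef]; linarith
  set G : Set (X × (Fin m → ℝ)) := {p : X × (Fin m → ℝ) | p.2 = f p.1} with hGdef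
  set S : Set (X × (Fin m → ℝ)) := G ∩ ball z t with hSdef
  set I₀ : ℝ≥0∞ := ∫⁻ x in ball z.1 (4*t) ∩ f ⁻¹' (ball z.2 (4*t)), Φ x ∂μ with hI₀
  set d : ℝ≥0∞ := EMetric.diam S with hd
  have hQm : (m:ℝ) + s = Q := by simp [hsdef]
  have hdiamS2t : d ≤ ENNReal.ofReal (2*t) := by
    refine EMetric.diam_le fun p hp q hq => ?_
    rw [edist_dist]
    refine ENNReal.ofReal_le_ofReal ?_
    have h1 : dist p z < t := mem_ball.1 hp.2
    have h2 : dist q z < t := mem_ball.1 hq.2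
    calc dist p q ≤ dist p z + dist z q := dist_triangle _ _ _
      _ ≤ 2 * t := by rw [dist_comm z q]; linarith
  have hdtop : d ≠ ∞ := (lt_of_le_of_lt hdiamS2t ENNReal.ofReal_lt_top).ne
  -- trivial cover in degenerate cases
  have htriv : ∀ (W : ℝ≥0∞), EMetric.diam S ^ Q ≤ W →
      ∃ T : ℕ → Set (X × (Fin m → ℝ)),
      (S ⊆ ⋃ n, T n) ∧ (∀ n, EMetric.diam (T n) ≤ ENNReal.ofReal (2 * t)) ∧
      ∑' n, EMetric.diam (T n) ^ Q ≤ W := by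
    intro W hW
    refine ⟨fun n => if n = 0 then S else ∅, ?_, ?_, ?_⟩
    · intro p hp; exact Set.mem_iUnion.2 ⟨0, by simpa using hp⟩
    · intro n
      by_cases hn : n = 0
      · simpa [hn] using hdiamS2t
      · simp [hn, EMetric.diam]
    · have : ∀ n : ℕ, n ≠ 0 →
          EMetric.diam (if n = 0 then S else (∅ : Set (X × (Fin m → ℝ)))) ^ Q = 0 := by
        intro n hn
        simp [hn, EMetric.diam, EMetric.diam_empty, ENNReal.zero_rpow_of_pos hQpos]
      rw [tsum_eq_single 0 this]
      simpa using hW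
  rcases eq_or_ne d 0 with hd0 | hd0
  · refine htriv _ ?_
    rw [← hd, hd0, ENNReal.zero_rpow_of_pos hQpos]
    exact zero_le
  rcases eq_or_ne I₀ ∞ with hItop | hItop
  · refine htriv _ ?_
    have h7 : (7 : ℝ≥0∞) ^ (m : ℝ) ≠ 0 := (ENNReal.rpow_pos (by norm_num) (by norm_num)).ne'
    have : (7 : ℝ≥0∞) ^ (m : ℝ) * (I₀ + ε) = ∞ := by
      rw [hItop, top_add, ENNReal.mul_top h7]
    rw [this]; exact le_top
  -- main case
  set A : Set X := Prod.fst '' S with hA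
  have hcont : hContent s A ≤ I₀ / d ^ (m:ℝ) := by
    have h := hyp z t ht htD
    rw [graph_proj_eq m f z (4*t)] at h
    exact h
  have hdm0 : d ^ (m:ℝ) ≠ 0 := by
    exact (ENNReal.rpow_pos (lt_of_le_of_ne (zero_le) (Ne.symm hd0)) hdtop).ne'
  have hdmtop : d ^ (m:ℝ) ≠ ∞ := by
    exact ENNReal.rpow_ne_top_of_nonneg (by positivity) hdtop
  set R : ℝ≥0∞ := I₀ / d ^ (m:ℝ) with hR
  have hRtop : R ≠ ∞ := by
    rw [hR]
    exact (ENNReal.div_lt_top hItop hdm0).ne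
  -- s must be positive
  have hspos : (0:ℝ) < s := by
    rcases lt_or_eq_of_le hs0 with h | h
    · exact h
    · exfalso
      have hcont' : hContent s A = ∞ := by
        rw [hContent]
        refine le_antisymm le_top ?_
        refine le_iInf fun U => le_iInf fun _ => ?_
        have : ∀ i : ℕ, EMetric.diam (U i) ^ s = 1 := by
          intro i; rw [← h, ENNReal.rpow_zero]
        rw [tsum_congr this]
        exact le_of_eq (ENNReal.tsum_const_eq_top_of_ne_zero one_ne_zero).symm
      rw [hcont'] at hcont
      exact hRtop (top_le_iff.1 hcont)

  -- slack choice
  set Tm : ℝ≥0∞ := (ENNReal.ofReal (2*t)) ^ (m:ℝ) with hTm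
  have hTm0 : Tm ≠ 0 :=
    (ENNReal.rpow_pos (ENNReal.ofReal_pos.2 (by linarith)) ENNReal.ofReal_ne_top).ne'
  have hTmtop : Tm ≠ ∞ := by
    rw [hTm]
    exact ENNReal.rpow_ne_top_of_nonneg (by positivity) ENNReal.ofReal_ne_top
  set eps1 : ℝ≥0∞ := ε / Tm with heps1
  have heps10 : eps1 ≠ 0 := by
    rw [heps1]
    exact (ENNReal.div_pos hε.ne' hTmtop).ne'
  have hdmeps1 : d ^ (m:ℝ) * eps1 ≤ ε := by
    calc d ^ (m:ℝ) * eps1 ≤ Tm * eps1 := by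
          refine mul_le_mul_left ?_ _
          rw [hTm]
          exact ENNReal.rpow_le_rpow hdiamS2t (by positivity)
      _ = ε := by rw [heps1, ENNReal.mul_div_cancel hTm0 hTmtop]
  -- extract a near-optimal content cover
  have hlt : hContent s A < R + eps1 :=
    lt_of_le_of_lt hcont (ENNReal.lt_add_right hRtop heps10)
  rw [hContent, iInf_lt_iff] at hlt
  obtain ⟨V, hV⟩ := hlt
  rw [iInf_lt_iff] at hV
  obtain ⟨hVcov, hVsum⟩ := hV
  -- base point and real diameter
  have hSne : S.Nonempty := by
    rcases Set.eq_empty_or_nonempty S with h | h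
    · exfalso; apply hd0; rw [hd, h, EMetric.diam, EMetric.diam_empty]
    · exact h
  obtain ⟨p₀, hp₀⟩ := hSne
  set d' : ℝ := d.toReal with hd'
  have hd'pos : 0 < d' := ENNReal.toReal_pos hd0 hdtop
  have hofd' : ENNReal.ofReal d' = d := ENNReal.ofReal_toReal hdtop
  have hvert : ∀ q ∈ S, ∀ a : Fin m, |q.2 a - p₀.2 a| ≤ d' := by
    intro q hq a
    have h1 : edist q p₀ ≤ d := EMetric.edist_le_diam_of_mem hq hp₀
    have h2 : edist q.2 p₀.2 ≤ d := by
      refine le_trans ?_ h1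
      rw [Prod.edist_eq]; exact le_sup_right
    have h3 : dist q.2 p₀.2 ≤ d' := by
      rw [edist_dist, ← hofd'] at h2
      exact (ENNReal.ofReal_le_ofReal_iff hd'pos.le).1 h2
    calc |q.2 a - p₀.2 a| = dist (q.2 a) (p₀.2 a) := (Real.dist_eq _ _).symm
      _ ≤ dist q.2 p₀.2 := dist_le_pi_dist _ _ a
      _ ≤ d' := h3
  have hp1A : ∀ p ∈ S, p.1 ∈ A := fun p hp => ⟨p, hp, rfl⟩
  have hAsub : ∀ x ∈ A, ∀ y ∈ A, edist x y ≤ d := by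
    rintro x ⟨p, hp, rfl⟩ y ⟨q, hq, rfl⟩
    refine le_trans ?_ (EMetric.edist_le_diam_of_mem hp hq)
    rw [Prod.edist_eq]; exact le_sup_left
  set v : ℕ → ℝ := fun i => (EMetric.diam (V i ∩ A)).toReal with hv
  have hdiamVA : ∀ i, EMetric.diam (V i ∩ A) ≤ d := fun i =>
    EMetric.diam_le fun x hx y hy => hAsub x hx.2 y hy.2
  have hdiamVAtop : ∀ i, EMetric.diam (V i ∩ A) ≠ ∞ := fun i =>
    (lt_of_le_of_lt (hdiamVA i) (lt_top_iff_ne_top.2 hdtop)).ne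
  have hofv : ∀ i, ENNReal.ofReal (v i) = EMetric.diam (V i ∩ A) := fun i =>
    ENNReal.ofReal_toReal (hdiamVAtop i)
  have hvle : ∀ i, v i ≤ d' := fun i => ENNReal.toReal_mono hdtop (hdiamVA i)
  have hv0 : ∀ i, 0 ≤ v i := fun _ => ENNReal.toReal_nonneg
  have hSG : ∀ p ∈ S, p.2 = f p.1 := fun p hp => hp.1
  -- the lattice pieces
  set K : ℕ → ℤ := fun i => ⌈d' / v i⌉ + 1 with hK
  set ctr : ℕ → (Fin m → ℤ) → (Fin m → ℝ) := fun i k a => p₀.2 a + (k a) * v i with hctr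
  set piece : ℕ × (Fin m → ℤ) → Set (X × (Fin m → ℝ)) := fun ik =>
    if v ik.1 = 0 then (if ik.2 = 0 then {p | p ∈ S ∧ p.1 ∈ V ik.1} else ∅)
    else (if ∀ a, |ik.2 a| ≤ K ik.1 then
      {p | p ∈ S ∧ p.1 ∈ V ik.1 ∧ p.2 ∈ closedBall (ctr ik.1 ik.2) (v ik.1 / 2)} else ∅)
    with hpiece
  -- coverage
  have hcover : S ⊆ ⋃ ik : ℕ × (Fin m → ℤ), piece ik := by
    intro q hq
    obtain ⟨i, hi⟩ := Set.mem_iUnion.1 (hVcov (hp1A q hq))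
    by_cases hvi : v i = 0
    · refine Set.mem_iUnion.2 ⟨(i, 0), ?_⟩
      simp only [hpiece, hvi, if_pos rfl, if_true]
      exact ⟨hq, hi⟩
    · have hvpos : 0 < v i := lt_of_le_of_ne (hv0 i) (Ne.symm hvi)
      set k : Fin m → ℤ := fun a => round ((q.2 a - p₀.2 a) / v i) with hk
      have hk1 : ∀ a, |q.2 a - ctr i k a| ≤ v i / 2 := by
        intro a
        have hround := abs_sub_round ((q.2 a - p₀.2 a) / v i)
        have heq : q.2 a - ctr i k a = ((q.2 a - p₀.2 a) / v i - k a) * v i := by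
          have h0 : ((q.2 a - p₀.2 a) / v i - k a) * v i = q.2 a - p₀.2 a - k a * v i := by
            rw [sub_mul, div_mul_cancel₀ _ (ne_of_gt hvpos)]
          rw [h0]
          simp only [hctr]
          ring
        rw [heq, abs_mul, abs_of_pos hvpos]
        calc |(q.2 a - p₀.2 a) / v i - (k a : ℝ)| * v i ≤ (1/2) * v i := by
              refine mul_le_mul_of_nonneg_right ?_ hvpos.le
              simpa [hk] using hround
          _ = v i / 2 := by ring
      have hk2 : ∀ a, |k a| ≤ K i := by
        intro a
        have h1 : |(q.2 a - p₀.2 a) / v i| ≤ d' / v i := by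
          rw [abs_div, abs_of_pos hvpos]
          exact div_le_div_of_nonneg_right (hvert q hq a) hvpos.le
        have h3 : |(k a : ℝ) - (q.2 a - p₀.2 a)/(v i)| ≤ 1/2 := by
          rw [abs_sub_comm]
          simpa [hk] using abs_sub_round ((q.2 a - p₀.2 a) / v i)
        have h5 : |(k a : ℝ)| ≤ (K i : ℝ) := by
          have habs := abs_sub_abs_le_abs_sub ((k a : ℝ)) ((q.2 a - p₀.2 a)/(v i))
          have hKr : (K i : ℝ) = (⌈d' / v i⌉ : ℝ) + 1 := by
            simp only [hK]; push_cast; ring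
          rw [hKr]
          linarith [Int.le_ceil (d'/v i)]
        exact_mod_cast h5
      refine Set.mem_iUnion.2 ⟨(i, k), ?_⟩
      simp only [hpiece, hvi, if_neg hvi, if_pos hk2]
      refine ⟨hq, hi, ?_⟩
      rw [mem_closedBall, dist_pi_le_iff (by positivity)]
      intro a
      rw [Real.dist_eq]
      exact hk1 a
  -- diameter of pieces
  have hpiece_diam : ∀ ik, EMetric.diam (piece ik) ≤ ENNReal.ofReal (v ik.1) := by
    rintro ⟨i, k⟩
    by_cases hvi : v i = 0
    · have hsub : (piece (i,k)).Subsingleton := by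
        simp only [hpiece, hvi, if_pos rfl]
        by_cases hk0 : k = 0
        · simp only [hk0, if_pos rfl]
          intro p hp q hq
          have hpA : p.1 ∈ V i ∩ A := ⟨hp.2, hp1A p hp.1⟩
          have hqA : q.1 ∈ V i ∩ A := ⟨hq.2, hp1A q hq.1⟩
          have h1 : edist p.1 q.1 ≤ EMetric.diam (V i ∩ A) :=
            EMetric.edist_le_diam_of_mem hpA hqA
          rw [← hofv i, hvi, ENNReal.ofReal_zero] at h1
          have h2 : p.1 = q.1 := by
            rw [← edist_eq_zero]
            exact le_antisymm h1 (zero_le)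
          have h3 : p.2 = q.2 := by rw [hSG p hp.1, hSG q hq.1, h2]
          exact Prod.ext h2 h3
        · simp only [hk0, if_neg hk0]
          exact Set.subsingleton_empty
      rw [EMetric.diam, Metric.ediam_eq_zero_iff.2 hsub]
      exact zero_le
    · simp only [hpiece, if_neg hvi]
      by_cases hkK : ∀ a, |k a| ≤ K i
      · simp only [if_pos hkK]
        refine EMetric.diam_le fun p hp q hq => ?_
        rw [Prod.edist_eq, sup_le_iff]
        constructor
        · have hpA : p.1 ∈ V i ∩ A := ⟨hp.2.1, hp1A p hp.1⟩
          have hqA : q.1 ∈ V i ∩ A := ⟨hq.2.1, hp1A q hq.1⟩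
          rw [hofv i]
          exact EMetric.edist_le_diam_of_mem hpA hqA
        · rw [edist_dist]
          refine ENNReal.ofReal_le_ofReal ?_
          have h1 : dist p.2 (ctr i k) ≤ v i / 2 := mem_closedBall.1 hp.2.2
          have h2 : dist q.2 (ctr i k) ≤ v i / 2 := mem_closedBall.1 hq.2.2
          calc dist p.2 q.2 ≤ dist p.2 (ctr i k) + dist (ctr i k) q.2 := dist_triangle _ _ _
            _ ≤ v i / 2 + v i / 2 := by rw [dist_comm (ctr i k) q.2]; exact add_le_add h1 h2
            _ = v i := by ring
      · simp only [if_neg hkK, EMetric.diam, EMetric.diam_empty]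
        exact zero_le
  have hpiece_diam2t : ∀ ik, EMetric.diam (piece ik) ≤ ENNReal.ofReal (2*t) := by
    intro ik
    refine le_trans (hpiece_diam ik) (le_trans ?_ hdiamS2t)
    rw [← hofd']
    exact ENNReal.ofReal_le_ofReal (hvle ik.1)
  -- per-index sums
  have hsum_i : ∀ i, (∑' k : Fin m → ℤ, EMetric.diam (piece (i,k)) ^ Q) ≤
      ENNReal.ofReal (7*d') ^ (m:ℝ) * EMetric.diam (V i) ^ s := by
    intro i
    by_cases hvi : v i = 0
    · have hzero : ∀ k : Fin m → ℤ, EMetric.diam (piece (i,k)) ^ Q = 0 := by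
        intro k
        have := hpiece_diam (i,k)
        rw [hvi, ENNReal.ofReal_zero] at this
        rw [le_zero_iff.1 this]
        exact ENNReal.zero_rpow_of_pos hQpos
      rw [tsum_congr hzero]
      simp
    · have hvpos : 0 < v i := lt_of_le_of_ne (hv0 i) (Ne.symm hvi)
      have hKpos : (1:ℤ) ≤ K i := by
        have : (0:ℤ) ≤ ⌈d' / v i⌉ := Int.ceil_nonneg (by positivity)
        simp only [hK]
        omega
      set NF : Finset (Fin m → ℤ) := Fintype.piFinset (fun _ => Finset.Icc (-(K i)) (K i))
        with hNF
      have hvanish : ∀ k ∉ NF, EMetric.diam (piece (i,k)) ^ Q = 0 := by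
        intro k hk
        have hknot : ¬ (∀ a, |k a| ≤ K i) := by
          intro hcon
          apply hk
          rw [hNF, Fintype.mem_piFinset]
          intro a
          rw [Finset.mem_Icc]
          exact abs_le.1 (hcon a)
        have : piece (i,k) = ∅ := by
          simp only [hpiece, if_neg hvi, if_neg hknot]
        rw [this, EMetric.diam, EMetric.diam_empty]
        exact ENNReal.zero_rpow_of_pos hQpos
      rw [tsum_eq_sum hvanish]
      have hterm : ∀ k ∈ NF, EMetric.diam (piece (i,k)) ^ Q ≤ (ENNReal.ofReal (v i)) ^ Q :=
        fun k _ => ENNReal.rpow_le_rpow (hpiece_diam (i,k)) hQpos.le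
      have hcard : (NF.card : ℝ) ≤ (7 * (d' / v i)) ^ m := by
        have hc1 : NF.card = ((2 * K i + 1).toNat) ^ m := by
          rw [hNF, Fintype.card_piFinset]
          simp only [Int.card_Icc]
          rw [Finset.prod_const, Finset.card_univ, Fintype.card_fin]
          congr 2
          omega
        have h2K : ((2 * K i + 1).toNat : ℝ) ≤ 7 * (d' / v i) := by
          have hnn : (0:ℤ) ≤ 2 * K i + 1 := by omega
          have hto : ((2 * K i + 1).toNat : ℝ) = ((2 * K i + 1 : ℤ) : ℝ) := by
            rw [← Int.cast_natCast, Int.toNat_of_nonneg hnn]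
          rw [hto]
          push_cast
          have hceil : (⌈d' / v i⌉ : ℝ) < d' / v i + 1 := Int.ceil_lt_add_one _
          have hdv1 : (1:ℝ) ≤ d' / v i := (one_le_div hvpos).2 (hvle i)
          have hKr : (K i : ℝ) = (⌈d' / v i⌉ : ℝ) + 1 := by
            simp only [hK]; push_cast; ring
          rw [hKr]
          linarith
        rw [hc1]
        push_cast
        exact pow_le_pow_left₀ (by positivity) h2K m
      have hsplit : (ENNReal.ofReal (v i)) ^ Q =
          (ENNReal.ofReal (v i)) ^ (m:ℝ) * (ENNReal.ofReal (v i)) ^ s := by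
        rw [← ENNReal.rpow_add _ _ (by simpa [ENNReal.ofReal_eq_zero] using hvpos)
          ENNReal.ofReal_ne_top, hQm]
      have hcardEN : (NF.card : ℝ≥0∞) ≤ (ENNReal.ofReal (7 * (d' / v i))) ^ (m:ℝ) := by
        have h := ENNReal.ofReal_le_ofReal hcard
        rw [ENNReal.ofReal_natCast] at h
        refine le_trans h ?_
        rw [ENNReal.ofReal_pow (by positivity), ← ENNReal.rpow_natCast]
      calc (∑ k ∈ NF, EMetric.diam (piece (i,k)) ^ Q)
          ≤ NF.card • ((ENNReal.ofReal (v i)) ^ Q) := Finset.sum_le_card_nsmul _ _ _ hterm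
        _ = (NF.card : ℝ≥0∞) * (ENNReal.ofReal (v i)) ^ Q := nsmul_eq_mul _ _
        _ ≤ (ENNReal.ofReal (7 * (d' / v i))) ^ (m:ℝ) *
            ((ENNReal.ofReal (v i)) ^ (m:ℝ) * (ENNReal.ofReal (v i)) ^ s) := by
            rw [← hsplit]
            exact mul_le_mul' hcardEN le_rfl
        _ = (ENNReal.ofReal (7 * d')) ^ (m:ℝ) * (ENNReal.ofReal (v i)) ^ s := by
            rw [← mul_assoc, ← ENNReal.mul_rpow_of_nonneg _ _ (by positivity : (0:ℝ) ≤ (m:ℝ)),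
              ← ENNReal.ofReal_mul (by positivity)]
            congr 3
            field_simp
        _ ≤ ENNReal.ofReal (7*d') ^ (m:ℝ) * EMetric.diam (V i) ^ s := by
            refine mul_le_mul' le_rfl ?_
            refine ENNReal.rpow_le_rpow ?_ hs0
            rw [hofv i]
            exact EMetric.diam_mono Set.inter_subset_left
  -- total
  have htotal : (∑' ik : ℕ × (Fin m → ℤ), EMetric.diam (piece ik) ^ Q) ≤
      (7:ℝ≥0∞) ^ (m:ℝ) * (I₀ + ε) := by
    have hps : (∑' ik : ℕ × (Fin m → ℤ), EMetric.diam (piece ik) ^ Q)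
        = ∑' (i:ℕ) (k : Fin m → ℤ), EMetric.diam (piece (i,k)) ^ Q :=
      ENNReal.tsum_prod (f := fun i k => EMetric.diam (piece (i,k)) ^ Q)
    rw [hps]
    have h1 : (∑' (i:ℕ) (k : Fin m → ℤ), EMetric.diam (piece (i,k)) ^ Q) ≤
        ∑' i : ℕ, ENNReal.ofReal (7*d') ^ (m:ℝ) * EMetric.diam (V i) ^ s :=
      ENNReal.tsum_le_tsum hsum_i
    rw [ENNReal.tsum_mul_left] at h1
    refine le_trans h1 ?_
    have h7d : ENNReal.ofReal (7*d') ^ (m:ℝ) = (7:ℝ≥0∞)^(m:ℝ) * d^(m:ℝ) := by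
      rw [ENNReal.ofReal_mul (by norm_num), ENNReal.mul_rpow_of_nonneg _ _ (by positivity : (0:ℝ) ≤ (m:ℝ)), hofd']
      norm_num
    rw [h7d, mul_assoc]
    refine mul_le_mul' le_rfl ?_
    calc d^(m:ℝ) * ∑' i : ℕ, EMetric.diam (V i) ^ s ≤ d^(m:ℝ) * (R + eps1) :=
          mul_le_mul' le_rfl hVsum.le
      _ = d^(m:ℝ) * R + d^(m:ℝ) * eps1 := mul_add _ _ _
      _ ≤ I₀ + ε := by
          refine add_le_add ?_ hdmeps1
          rw [hR, ENNReal.mul_div_cancel hdm0 hdmtop]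
  -- reindex to ℕ
  obtain ⟨T, hTcov, hTdiam, hTsum⟩ := reindex_cover piece Q hQpos (ENNReal.ofReal (2*t))
    hpiece_diam2t
  exact ⟨T, le_trans hcover hTcov, hTdiam, le_trans hTsum htotal⟩


lemma doub_pow' {X : Type*} [MetricSpace X] [MeasurableSpace X]
    (μ : Measure X) (Cμ : ℝ)
    (hdoub : ∀ (x : X) (r : ℝ), 0 < r →
      μ (ball x (2 * r)) ≤ ENNReal.ofReal Cμ * μ (ball x r))
    (x : X) (r : ℝ) (hr : 0 < r) : ∀ k : ℕ,
    μ (ball x (2 ^ k * r)) ≤ (ENNReal.ofReal Cμ) ^ k * μ (ball x r) := by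
  intro k
  induction k with
  | zero => simp
  | succ n ih =>
      have h2 : (2:ℝ) ^ (n+1) * r = 2 * (2 ^ n * r) := by ring
      have hpos : (0:ℝ) < 2 ^ n * r := by positivity
      calc μ (ball x (2 ^ (n+1) * r)) = μ (ball x (2 * (2 ^ n * r))) := by rw [h2]
        _ ≤ ENNReal.ofReal Cμ * μ (ball x (2 ^ n * r)) := hdoub x _ hpos
        _ ≤ ENNReal.ofReal Cμ * ((ENNReal.ofReal Cμ) ^ n * μ (ball x r)) :=
            mul_le_mul_right ih _
        _ = (ENNReal.ofReal Cμ) ^ (n+1) * μ (ball x r) := by ring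

lemma packing_count {X : Type*} [MetricSpace X] [SecondCountableTopology X]
    [MeasurableSpace X] [BorelSpace X]
    (μ : Measure X)
    (hpos : ∀ (x : X) (r : ℝ), 0 < r → 0 < μ (ball x r) ∧ μ (ball x r) < ∞)
    (Cμ : ℝ)
    (hdoub : ∀ (x : X) (r : ℝ), 0 < r →
      μ (ball x (2 * r)) ≤ ENNReal.ofReal Cμ * μ (ball x r))
    (m : ℕ) (t : ℝ) (ht : 0 < t) (p : X × (Fin m → ℝ)) (F : Finset (X × (Fin m → ℝ)))
    (hF : ∀ z ∈ F, dist z p < 4 * t)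
    (hsep : ∀ z ∈ F, ∀ z' ∈ F, z ≠ z' → t ≤ dist z z') :
    (F.card : ℝ≥0∞) ≤ (ENNReal.ofReal Cμ) ^ 5 * 32 ^ m := by
  classical
  set lam : Measure (X × (Fin m → ℝ)) := μ.prod volume with hlam
  set C₂ : ℝ≥0∞ := (ENNReal.ofReal Cμ) ^ 5 * 32 ^ m with hC₂
  set L : ℝ≥0∞ := lam (ball p (5 * t)) with hL
  have hlam_ball : ∀ (q : X × (Fin m → ℝ)) (r : ℝ),
      lam (ball q r) = μ (ball q.1 r) * volume (ball q.2 r) := by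
    intro q r
    rw [hlam, ← ball_prod_same, Measure.prod_prod]
  have hLpos : L ≠ 0 := by
    rw [hL, hlam_ball]
    have h1 := (hpos p.1 (5*t) (by linarith)).1
    have h2 : (0:ℝ≥0∞) < volume (ball p.2 (5*t)) := by
      rw [Real.volume_pi_ball _ (by linarith : (0:ℝ) < 5*t)]
      simp only [ENNReal.ofReal_pos]
      positivity
    exact (mul_pos h1.ne' h2.ne').ne'
  have hLtop : L ≠ ∞ := by
    rw [hL, hlam_ball]
    have h1 := (hpos p.1 (5*t) (by linarith)).2
    have h2 : volume (ball p.2 (5*t)) < ∞ := by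
      rw [Real.volume_pi_ball _ (by linarith : (0:ℝ) < 5*t)]
      exact ENNReal.ofReal_lt_top
    exact (ENNReal.mul_lt_top h1 h2).ne
  have hkey : ∀ z ∈ F, L ≤ C₂ * lam (ball z (t/2)) := by
    intro z hz
    have hsub : ball p (5*t) ⊆ ball z (2^5 * (t/2)) := by
      intro w hw
      rw [mem_ball] at hw ⊢
      have := hF z hz
      have hzp : dist z p < 4 * t := this
      calc dist w z ≤ dist w p + dist p z := dist_triangle _ _ _
        _ < 5*t + 4*t := by rw [dist_comm] at hzp; linarith
        _ ≤ 2^5 * (t/2) := by linarith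
    have hx : μ (ball z.1 (2^5 * (t/2))) ≤ (ENNReal.ofReal Cμ)^5 * μ (ball z.1 (t/2)) :=
      doub_pow' μ Cμ hdoub _ _ (by linarith) 5
    have hy : volume (ball z.2 (2^5 * (t/2))) = (32:ℝ≥0∞) ^ m * volume (ball z.2 (t/2)) := by
      rw [Real.volume_pi_ball _ (by linarith : (0:ℝ) < 2^5 * (t/2)),
        Real.volume_pi_ball _ (by linarith : (0:ℝ) < t/2)]
      rw [Fintype.card_fin]
      have h1 : (2 * (2^5 * (t/2)))^m = 32^m * (2*(t/2))^m := by
        rw [← mul_pow]; ring_nf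
      rw [h1, ENNReal.ofReal_mul (by positivity), ENNReal.ofReal_pow (by norm_num)]
      norm_num
    calc L ≤ lam (ball z (2^5 * (t/2))) := measure_mono hsub
      _ = μ (ball z.1 (2^5 * (t/2))) * volume (ball z.2 (2^5 * (t/2))) := hlam_ball _ _
      _ ≤ ((ENNReal.ofReal Cμ)^5 * μ (ball z.1 (t/2))) * ((32:ℝ≥0∞) ^ m * volume (ball z.2 (t/2))) := by
          rw [hy]; exact mul_le_mul_left hx _
      _ = C₂ * (μ (ball z.1 (t/2)) * volume (ball z.2 (t/2))) := by rw [hC₂]; ring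
      _ = C₂ * lam (ball z (t/2)) := by rw [hlam_ball]
  have hdisj : (↑F : Set (X × (Fin m → ℝ))).PairwiseDisjoint (fun z => ball z (t/2)) := by
    intro z hz z' hz' hne
    exact ball_disjoint_ball (by linarith [hsep z hz z' hz' hne])
  have hchain : (F.card : ℝ≥0∞) * L ≤ C₂ * L := by
    calc (F.card : ℝ≥0∞) * L = ∑ _z ∈ F, L := by simp [Finset.sum_const, nsmul_eq_mul]
      _ ≤ ∑ z ∈ F, C₂ * lam (ball z (t/2)) := Finset.sum_le_sum hkey
      _ = C₂ * ∑ z ∈ F, lam (ball z (t/2)) := by rw [Finset.mul_sum]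
      _ = C₂ * lam (⋃ z ∈ F, ball z (t/2)) := by
          rw [measure_biUnion_finset hdisj (fun z _ => measurableSet_ball)]
      _ ≤ C₂ * L := by
          refine mul_le_mul_right (measure_mono ?_) _
          refine Set.iUnion₂_subset fun z hz => fun w hw => ?_
          rw [mem_ball] at hw ⊢
          have := hF z hz
          calc dist w p ≤ dist w z + dist z p := dist_triangle _ _ _
            _ < t/2 + 4*t := by linarith
            _ ≤ 5 * t := by linarith
  exact (ENNReal.mul_le_mul_iff_left hLpos hLtop).1 hchain

lemma exists_maximal_separated {P : Type*} [MetricSpace P] [SecondCountableTopology P]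
    (G : Set P) (t : ℝ) (ht : 0 < t) :
    ∃ M : Set P, M ⊆ G ∧ M.Countable ∧
      (∀ z ∈ M, ∀ z' ∈ M, z ≠ z' → t ≤ dist z z') ∧
      (∀ g ∈ G, ∃ z ∈ M, dist g z < t) := by
  set S : Set (Set P) := {M | M ⊆ G ∧ ∀ z ∈ M, ∀ z' ∈ M, z ≠ z' → t ≤ dist z z'} with hS
  have hchain : ∀ c ⊆ S, IsChain (· ⊆ ·) c → c.Nonempty → ∃ ub ∈ S, ∀ s ∈ c, s ⊆ ub := by
    intro c hc hch _
    refine ⟨⋃₀ c, ⟨Set.sUnion_subset fun s hs => (hc hs).1, ?_⟩,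
      fun s hs => Set.subset_sUnion_of_mem hs⟩
    intro z hz z' hz' hne'
    obtain ⟨s, hs, hzs⟩ := hz
    obtain ⟨s', hs', hzs'⟩ := hz'
    rcases eq_or_ne s s' with rfl | hss
    · exact (hc hs).2 z hzs z' hzs' hne'
    rcases hch.total hs hs' with h | h
    · exact (hc hs').2 z (h hzs) z' hzs' hne'
    · exact (hc hs).2 z hzs z' (h hzs') hne'
  obtain ⟨M, -, hMmax⟩ := zorn_subset_nonempty S hchain ∅ ⟨Set.empty_subset _, by simp⟩
  have hMS : M ∈ S := hMmax.prop
  have hsep := hMS.2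
  have hcov : ∀ g ∈ G, ∃ z ∈ M, dist g z < t := by
    intro g hg
    by_contra hno
    push_neg at hno
    have hgM : g ∉ M := by
      intro hgM
      have := hno g hgM
      simp at this
      linarith
    have hMS' : insert g M ∈ S := by
      constructor
      · exact Set.insert_subset hg hMS.1
      · intro z hz z' hz' hne'
        rcases hz with rfl | hz
        · rcases hz' with rfl | hz'
          · exact absurd rfl hne'
          · exact hno z' hz'
        · rcases hz' with rfl | hz'
          · rw [dist_comm]; exact hno z hz
          · exact hsep z hz z' hz' hne'
    have := hMmax.2 hMS' (Set.subset_insert g M) (Set.mem_insert g M)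
    exact hgM this
  refine ⟨M, hMS.1, ?_, hsep, hcov⟩
  have hdisj : M.PairwiseDisjoint (fun z => ball z (t/2)) := by
    intro z hz z' hz' hne'
    exact ball_disjoint_ball (by linarith [hsep z hz z' hz' hne'])
  exact hdisj.countable_of_isOpen (fun z _ => isOpen_ball)
    (fun z _ => ⟨z, mem_ball_self (by linarith)⟩)

lemma global_cover {X : Type*} [MetricSpace X] [SecondCountableTopology X]
    [MeasurableSpace X] [BorelSpace X]
    (μ : Measure X)
    (hpos : ∀ (x : X) (r : ℝ), 0 < r → 0 < μ (ball x r) ∧ μ (ball x r) < ∞)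
    (Cμ : ℝ)
    (hdoub : ∀ (x : X) (r : ℝ), 0 < r →
      μ (ball x (2 * r)) ≤ ENNReal.ofReal Cμ * μ (ball x r))
    (m : ℕ) (hm1 : 1 ≤ m) (hmQ : (m : ℝ) ≤ Real.logb 2 Cμ)
    (f : X → (Fin m → ℝ)) (hf : Measurable f)
    (Φ : X → ℝ≥0∞) (hΦmeas : Measurable Φ)
    (hyp : ∀ (z : X × (Fin m → ℝ)) (r : ℝ), 0 < r →
      ENNReal.ofReal (4 * r) < EMetric.diam (Set.univ : Set X) →
      hContent (Real.logb 2 Cμ - m)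
          (Prod.fst '' ({p : X × (Fin m → ℝ) | p.2 = f p.1} ∩ ball z r)) ≤
        (∫⁻ x in Prod.fst '' ({p : X × (Fin m → ℝ) | p.2 = f p.1} ∩ ball z (4 * r)),
            Φ x ∂μ) /
          EMetric.diam ({p : X × (Fin m → ℝ) | p.2 = f p.1} ∩ ball z r) ^ (m : ℝ))
    (E U : Set X) (hUmeas : MeasurableSet U)
    (t : ℝ) (ht : 0 < t)
    (htD : ENNReal.ofReal (4 * t) < EMetric.diam (Set.univ : Set X))
    (hEU : ∀ x ∈ E, ball x (5 * t) ⊆ U)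
    (ε : ℝ≥0∞) (hε : 0 < ε) :
    ∃ T : ℕ → Set (X × (Fin m → ℝ)),
      ((fun x => (x, f x)) '' E ⊆ ⋃ n, T n) ∧
      (∀ n, EMetric.diam (T n) ≤ ENNReal.ofReal (2 * t)) ∧
      ∑' n, EMetric.diam (T n) ^ (Real.logb 2 Cμ) ≤
        (7:ℝ≥0∞) ^ (m:ℝ) * ((ENNReal.ofReal Cμ) ^ 5 * 32 ^ m) * (∫⁻ x in U, Φ x ∂μ) +
          (7:ℝ≥0∞) ^ (m:ℝ) * ε := by
  classical
  set Q : ℝ := Real.logb 2 Cμ with hQdef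
  have hQpos : (0:ℝ) < Q := lt_of_lt_of_le (by exact_mod_cast hm1) hmQ
  set G : Set (X × (Fin m → ℝ)) := {p : X × (Fin m → ℝ) | p.2 = f p.1} with hG
  obtain ⟨M, hMG, hMc, hMsep, hMcov⟩ := exists_maximal_separated G t ht
  haveI : Countable ↥M := hMc.to_subtype
  haveI : Encodable ↥M := Encodable.ofCountable _
  set C₂ : ℝ≥0∞ := (ENNReal.ofReal Cμ) ^ 5 * 32 ^ m with hC₂
  set kept : ↥M → Prop := fun j => ∃ x ∈ E, (x, f x) ∈ ball (j : X × (Fin m → ℝ)) t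
    with hkept
  set Aj : ↥M → Set X := fun j =>
    ball (j : X × (Fin m → ℝ)).1 (4*t) ∩ f ⁻¹' (ball (j : X × (Fin m → ℝ)).2 (4*t)) with hAj
  have hAjmeas : ∀ j, MeasurableSet (Aj j) :=
    fun j => measurableSet_ball.inter (hf measurableSet_ball)
  have hAjU : ∀ j, kept j → Aj j ⊆ U := by
    rintro j ⟨e, heE, heb⟩ x' hx'
    have h1 : dist x' (j : X × (Fin m → ℝ)).1 < 4*t := mem_ball.1 hx'.1
    have h2 : dist (j : X × (Fin m → ℝ)).1 e < t := by
      have hb := mem_ball.1 heb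
      calc dist (j : X × (Fin m → ℝ)).1 e
          = dist ((e, f e) : X × (Fin m → ℝ)).1 (j : X × (Fin m → ℝ)).1 := by rw [dist_comm]
        _ ≤ dist ((e, f e) : X × (Fin m → ℝ)) (j : X × (Fin m → ℝ)) := by
            rw [Prod.dist_eq]; exact le_sup_left
        _ < t := hb
    refine hEU e heE ?_
    rw [mem_ball]
    calc dist x' e ≤ dist x' (j : X × (Fin m → ℝ)).1 + dist (j : X × (Fin m → ℝ)).1 e :=
          dist_triangle _ _ _
      _ < 4*t + t := add_lt_add h1 h2
      _ = 5*t := by ring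
  set εj : ↥M → ℝ≥0∞ := fun j => ε * (2:ℝ≥0∞)⁻¹ ^ (Encodable.encode j + 1) with hεj
  have hεj0 : ∀ j, 0 < εj j := by
    intro j
    refine ENNReal.mul_pos hε.ne' ?_
    refine (ENNReal.pow_ne_zero ?_ _)
    simp
  have hcovers : ∀ j : ↥M, ∃ T : ℕ → Set (X × (Fin m → ℝ)),
      (kept j → (G ∩ ball (j : X × (Fin m → ℝ)) t ⊆ ⋃ n, T n)) ∧
      (∀ n, EMetric.diam (T n) ≤ ENNReal.ofReal (2*t)) ∧
      ∑' n, EMetric.diam (T n) ^ Q ≤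
        (if kept j then (7:ℝ≥0∞)^(m:ℝ) * ((∫⁻ x in Aj j, Φ x ∂μ) + εj j) else 0) := by
    intro j
    by_cases hk : kept j
    · obtain ⟨T, h1, h2, h3⟩ := local_cover μ Cμ m hm1 hmQ f Φ hyp
        (j : X × (Fin m → ℝ)) t ht htD (εj j) (hεj0 j)
      refine ⟨T, fun _ => h1, h2, ?_⟩
      rw [if_pos hk]
      exact h3
    · refine ⟨fun _ => ∅, fun hk' => absurd hk' hk, by simp [EMetric.diam], ?_⟩
      rw [if_neg hk]
      simp [EMetric.diam, EMetric.diam_empty, ENNReal.zero_rpow_of_pos hQpos]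
  choose T hTcov hTdiam hTsum using hcovers
  -- coverage
  have hcover : (fun x => (x, f x)) '' E ⊆ ⋃ jn : ↥M × ℕ, T jn.1 jn.2 := by
    rintro _ ⟨x, hxE, rfl⟩
    have hxG : ((x, f x) : X × (Fin m → ℝ)) ∈ G := by
      simp only [hG, Set.mem_setOf_eq]
    obtain ⟨z, hzM, hzd⟩ := hMcov _ hxG
    have hkj : kept ⟨z, hzM⟩ := ⟨x, hxE, mem_ball.2 hzd⟩
    have hmem := hTcov ⟨z, hzM⟩ hkj ⟨hxG, mem_ball.2 hzd⟩
    obtain ⟨n, hn⟩ := Set.mem_iUnion.1 hmem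
    exact Set.mem_iUnion.2 ⟨(⟨z, hzM⟩, n), hn⟩
  -- the εj sum
  have hεsum : (∑' j : ↥M, εj j) ≤ ε := by
    rw [hεj]
    rw [ENNReal.tsum_mul_left]
    have h1 : (∑' j : ↥M, (2:ℝ≥0∞)⁻¹ ^ (Encodable.encode j + 1)) ≤
        ∑' n : ℕ, (2:ℝ≥0∞)⁻¹ ^ (n + 1) := by
      exact ENNReal.tsum_comp_le_tsum_of_injective Encodable.encode_injective
        (fun n => (2:ℝ≥0∞)⁻¹ ^ (n + 1))
    have h2 : (∑' n : ℕ, (2:ℝ≥0∞)⁻¹ ^ (n + 1)) = 1 := by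
      have h3 : ∀ n : ℕ, (2:ℝ≥0∞)⁻¹ ^ (n + 1) = (2:ℝ≥0∞)⁻¹ ^ n * 2⁻¹ := fun n => pow_succ _ _
      rw [tsum_congr h3, ENNReal.tsum_mul_right, ENNReal.tsum_geometric,
        ENNReal.one_sub_inv_two, inv_inv]
      exact ENNReal.mul_inv_cancel (by norm_num) (by norm_num)
    calc ε * (∑' j : ↥M, (2:ℝ≥0∞)⁻¹ ^ (Encodable.encode j + 1)) ≤ ε * 1 := by
          exact mul_le_mul' le_rfl (le_trans h1 h2.le)
      _ = ε := mul_one ε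
  -- the main overlap sum
  have hmain : (∑' j : ↥M, (if kept j then ∫⁻ x in Aj j, Φ x ∂μ else 0)) ≤
      C₂ * ∫⁻ x in U, Φ x ∂μ := by
    set gj : ↥M → X → ℝ≥0∞ := fun j x => if kept j then (Aj j).indicator Φ x else 0 with hgj
    have hgjmeas : ∀ j, Measurable (gj j) := by
      intro j
      by_cases hk : kept j
      · simpa [hgj, hk] using hΦmeas.indicator (hAjmeas j)
      · simpa [hgj, hk] using measurable_const
    have hstep1 : (∑' j : ↥M, (if kept j then ∫⁻ x in Aj j, Φ x ∂μ else 0)) =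
        ∫⁻ x, (∑' j : ↥M, gj j x) ∂μ := by
      rw [lintegral_tsum (fun j => (hgjmeas j).aemeasurable)]
      refine tsum_congr fun j => ?_
      by_cases hk : kept j
      · simp only [hgj, hk, if_true]
        rw [lintegral_indicator (hAjmeas j)]
      · simp [hgj, hk]
    rw [hstep1]
    have hpt : ∀ x, (∑' j : ↥M, gj j x) ≤ C₂ * U.indicator Φ x := by
      intro x
      by_cases hxU : x ∈ U
      · have hb : ∀ j : ↥M, gj j x ≤
            Φ x * (if kept j ∧ x ∈ Aj j then 1 else 0) := by
          intro j
          by_cases hk : kept j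
          · by_cases hxA : x ∈ Aj j
            · simp [hgj, hk, hxA, Set.indicator_of_mem]
            · simp [hgj, hk, hxA, Set.indicator_of_notMem]
          · simp [hgj, hk]
        have hcount : (∑' j : ↥M, (if kept j ∧ x ∈ Aj j then (1:ℝ≥0∞) else 0)) ≤ C₂ := by
          rw [ENNReal.tsum_eq_iSup_sum]
          refine iSup_le fun F => ?_
          have hF2 : (∑ j ∈ F, (if kept j ∧ x ∈ Aj j then (1:ℝ≥0∞) else 0)) =
              ((F.filter (fun j => kept j ∧ x ∈ Aj j)).card : ℝ≥0∞) := by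
            rw [Finset.sum_boole]
          rw [hF2]
          set F' : Finset (X × (Fin m → ℝ)) :=
            (F.filter (fun j => kept j ∧ x ∈ Aj j)).image (Subtype.val) with hF'
          have hcard : (F.filter (fun j => kept j ∧ x ∈ Aj j)).card = F'.card := by
            rw [hF', Finset.card_image_of_injective _ Subtype.val_injective]
          rw [hcard]
          refine packing_count μ hpos Cμ hdoub m t ht ((x, f x) : X × (Fin m → ℝ)) F' ?_ ?_
          · intro z hz
            rw [hF', Finset.mem_image] at hz
            obtain ⟨j, hj, rfl⟩ := hz
            have hxA : x ∈ Aj j := (Finset.mem_filter.1 hj).2.2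
            rw [Prod.dist_eq]
            rw [sup_lt_iff]
            constructor
            · rw [dist_comm]; exact mem_ball.1 hxA.1
            · rw [dist_comm]; exact mem_ball.1 hxA.2
          · intro z hz z' hz' hne
            rw [hF', Finset.mem_image] at hz hz'
            obtain ⟨j, _, rfl⟩ := hz
            obtain ⟨j', _, rfl⟩ := hz'
            exact hMsep _ j.2 _ j'.2 hne
        calc (∑' j : ↥M, gj j x) ≤
            ∑' j : ↥M, Φ x * (if kept j ∧ x ∈ Aj j then 1 else 0) :=
              ENNReal.tsum_le_tsum hb
          _ = Φ x * ∑' j : ↥M, (if kept j ∧ x ∈ Aj j then (1:ℝ≥0∞) else 0) :=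
              ENNReal.tsum_mul_left
          _ ≤ Φ x * C₂ := mul_le_mul' le_rfl hcount
          _ = C₂ * U.indicator Φ x := by
              rw [Set.indicator_of_mem hxU, mul_comm]
      · have hz : ∀ j : ↥M, gj j x = 0 := by
          intro j
          by_cases hk : kept j
          · have : x ∉ Aj j := fun hxA => hxU (hAjU j hk hxA)
            simp [hgj, hk, this, Set.indicator_of_notMem]
          · simp [hgj, hk]
        rw [tsum_congr hz]
        simp
    calc (∫⁻ x, (∑' j : ↥M, gj j x) ∂μ) ≤ ∫⁻ x, C₂ * U.indicator Φ x ∂μ :=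
          lintegral_mono hpt
      _ = C₂ * ∫⁻ x, U.indicator Φ x ∂μ :=
          lintegral_const_mul C₂ (hΦmeas.indicator hUmeas)
      _ = C₂ * ∫⁻ x in U, Φ x ∂μ := by rw [lintegral_indicator hUmeas]
  -- total
  obtain ⟨T', hT'cov, hT'diam, hT'sum⟩ := reindex_cover (fun jn : ↥M × ℕ => T jn.1 jn.2)
    Q hQpos (ENNReal.ofReal (2*t)) (fun jn => hTdiam jn.1 jn.2)
  refine ⟨T', le_trans hcover hT'cov, hT'diam, ?_⟩
  refine le_trans hT'sum ?_
  have hps : (∑' jn : ↥M × ℕ, EMetric.diam (T jn.1 jn.2) ^ Q)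
      = ∑' (j : ↥M) (n : ℕ), EMetric.diam (T j n) ^ Q :=
    ENNReal.tsum_prod (f := fun j n => EMetric.diam (T j n) ^ Q)
  rw [hps]
  have h1 : (∑' (j : ↥M) (n : ℕ), EMetric.diam (T j n) ^ Q) ≤
      ∑' j : ↥M, (if kept j then (7:ℝ≥0∞)^(m:ℝ) * ((∫⁻ x in Aj j, Φ x ∂μ) + εj j) else 0) :=
    ENNReal.tsum_le_tsum hTsum
  refine le_trans h1 ?_
  have h2 : ∀ j : ↥M, (if kept j then (7:ℝ≥0∞)^(m:ℝ) * ((∫⁻ x in Aj j, Φ x ∂μ) + εj j) else 0) ≤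
      (7:ℝ≥0∞)^(m:ℝ) * ((if kept j then ∫⁻ x in Aj j, Φ x ∂μ else 0) + εj j) := by
    intro j
    by_cases hk : kept j
    · rw [if_pos hk, if_pos hk]
    · rw [if_neg hk, if_neg hk]
      exact zero_le
  refine le_trans (ENNReal.tsum_le_tsum h2) ?_
  rw [ENNReal.tsum_mul_left, ENNReal.tsum_add]
  calc (7:ℝ≥0∞)^(m:ℝ) *
        ((∑' j : ↥M, (if kept j then ∫⁻ x in Aj j, Φ x ∂μ else 0)) + ∑' j : ↥M, εj j)
      ≤ (7:ℝ≥0∞)^(m:ℝ) * ((C₂ * ∫⁻ x in U, Φ x ∂μ) + ε) := by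
        exact mul_le_mul' le_rfl (add_le_add hmain hεsum)
    _ = (7:ℝ≥0∞) ^ (m:ℝ) * (C₂ * ∫⁻ x in U, Φ x ∂μ) + (7:ℝ≥0∞) ^ (m:ℝ) * ε := mul_add _ _ _
    _ = (7:ℝ≥0∞) ^ (m:ℝ) * C₂ * (∫⁻ x in U, Φ x ∂μ) + (7:ℝ≥0∞) ^ (m:ℝ) * ε := by
        rw [hC₂]; ring


/-- general criterion for the quantitative Luzin condition (N_Q) for the graph
mapping f̄(x) = (x, f(x)) of a measurable f : X → ℝ^m: if a weight Φ ∈ L¹_loc controls the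
Hausdorff content of projections of graph pieces as in (4.1), then
H^Q(f̄(E)) ≤ C ∫_E Φ dμ for all measurable E, where C depends only on C_μ and m; in
particular f̄ satisfies Luzin's condition (N_Q). -/
theorem stmt_6 {X : Type*} [MetricSpace X] [CompleteSpace X] [SecondCountableTopology X]
    [MeasurableSpace X] [BorelSpace X]
    (μ : Measure X)
    (hpos : ∀ (x : X) (r : ℝ), 0 < r → 0 < μ (ball x r) ∧ μ (ball x r) < ∞)
    (Cμ : ℝ) (hCμ : 1 ≤ Cμ)
    (hdoub : ∀ (x : X) (r : ℝ), 0 < r →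
      μ (ball x (2 * r)) ≤ ENNReal.ofReal Cμ * μ (ball x r))
    (m : ℕ) (hm1 : 1 ≤ m) (hmQ : (m : ℝ) ≤ Real.logb 2 Cμ)
    (f : X → (Fin m → ℝ)) (hf : Measurable f)
    (Φ : X → ℝ≥0∞) (hΦmeas : Measurable Φ)
    (hΦloc : ∀ K : Set X, IsCompact K → ∫⁻ x in K, Φ x ∂μ ≠ ∞)
    (hyp : ∀ (z : X × (Fin m → ℝ)) (r : ℝ), 0 < r →
      ENNReal.ofReal (4 * r) < EMetric.diam (Set.univ : Set X) →
      hContent (Real.logb 2 Cμ - m)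
          (Prod.fst '' ({p : X × (Fin m → ℝ) | p.2 = f p.1} ∩ ball z r)) ≤
        (∫⁻ x in Prod.fst '' ({p : X × (Fin m → ℝ) | p.2 = f p.1} ∩ ball z (4 * r)),
            Φ x ∂μ) /
          EMetric.diam ({p : X × (Fin m → ℝ) | p.2 = f p.1} ∩ ball z r) ^ (m : ℝ)) :
    ∃ C : ℝ≥0∞, 0 < C ∧ C ≠ ∞ ∧
      (∀ E : Set X, MeasurableSet E →
        μH[Real.logb 2 Cμ] ((fun x => (x, f x)) '' E) ≤ C * ∫⁻ x in E, Φ x ∂μ) ∧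
      (∀ E : Set X, μ E = 0 → μH[Real.logb 2 Cμ] ((fun x => (x, f x)) '' E) = 0) := by
  classical
  set Q : ℝ := Real.logb 2 Cμ with hQdef
  have hQpos : (0:ℝ) < Q := lt_of_lt_of_le (by exact_mod_cast hm1) hmQ
  set K₀ : ℝ≥0∞ := (7:ℝ≥0∞) ^ (m:ℝ) * ((ENNReal.ofReal Cμ) ^ 5 * 32 ^ m) with hK₀
  have h7pos : (0:ℝ≥0∞) < (7:ℝ≥0∞) ^ (m:ℝ) := ENNReal.rpow_pos (by norm_num) (by norm_num)
  have h7top : (7:ℝ≥0∞) ^ (m:ℝ) ≠ ∞ :=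
    ENNReal.rpow_ne_top_of_nonneg (by positivity) (by norm_num)
  have hK₀top : K₀ ≠ ∞ := by
    rw [hK₀]
    exact ENNReal.mul_ne_top h7top
      (ENNReal.mul_ne_top (pow_ne_top ENNReal.ofReal_ne_top)
        (by simp [pow_ne_top]))
  set CC : ℝ≥0∞ := K₀ + 1 with hCC
  have hCC0 : (0:ℝ≥0∞) < CC := by rw [hCC]; exact lt_of_lt_of_le zero_lt_one le_add_self
  have hCCtop : CC ≠ ∞ := by
    rw [hCC]
    exact ENNReal.add_ne_top.2 ⟨hK₀top, ENNReal.one_ne_top⟩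
  refine ⟨CC, hCC0, hCCtop, ?_⟩
  -- it suffices to prove the first statement
  suffices hmainclaim : ∀ E : Set X, MeasurableSet E →
      μH[Q] ((fun x => (x, f x)) '' E) ≤ CC * ∫⁻ x in E, Φ x ∂μ by
    refine ⟨hmainclaim, fun E hE0 => ?_⟩
    set E' := toMeasurable μ E with hE'
    have hE'0 : μ E' = 0 := by rwa [measure_toMeasurable]
    have h1 : μH[Q] ((fun x => (x, f x)) '' E) ≤ μH[Q] ((fun x => (x, f x)) '' E') :=
      measure_mono (Set.image_mono (subset_toMeasurable μ E))
    have h2 := hmainclaim E' (measurableSet_toMeasurable μ E)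
    have h3 : (∫⁻ x in E', Φ x ∂μ) = 0 := by
      rw [Measure.restrict_eq_zero.2 hE'0]
      exact lintegral_zero_measure _
    rw [h3, mul_zero] at h2
    exact le_antisymm (le_trans h1 h2) (zero_le)
  -- degenerate case: X is a subsingleton
  rcases eq_or_ne (EMetric.diam (Set.univ : Set X)) 0 with hD0 | hD0
  · intro E _
    have hsub : ((fun x => (x, f x)) '' E).Subsingleton := by
      have hXsub : (Set.univ : Set X).Subsingleton := EMetric.diam_eq_zero_iff.1 hD0
      intro p hp q hq
      obtain ⟨x, _, rfl⟩ := hp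
      obtain ⟨y, _, rfl⟩ := hq
      have : x = y := hXsub (Set.mem_univ x) (Set.mem_univ y)
      rw [this]
    have : μH[Q] ((fun x => (x, f x)) '' E) = 0 := by
      rcases Set.eq_empty_or_nonempty ((fun x => (x, f x)) '' E) with h | ⟨p, hp⟩
      · rw [h]; exact measure_empty
      · haveI := MeasureTheory.Measure.noAtoms_hausdorff (X × (Fin m → ℝ)) hQpos
        refine le_antisymm ?_ (zero_le)
        calc μH[Q] ((fun x => (x, f x)) '' E) ≤ μH[Q] {p} := by
              refine measure_mono fun q hq => ?_
              have : q = p := hsub hq hp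
              simp [this]
          _ = 0 := measure_singleton p
    rw [this]
    exact zero_le
  -- main case
  haveI hproper : ProperSpace X := properSpace_of_doubling μ hpos Cμ hdoub
  have hXne : Nonempty X := by
    by_contra hX
    rw [not_nonempty_iff] at hX
    apply hD0
    rw [Set.univ_eq_empty_iff.2 hX, EMetric.diam, EMetric.diam_empty]
  obtain ⟨x₀⟩ := hXne
  set ν : Measure X := μ.withDensity Φ with hν
  have hνcb : ∀ (x : X) (R : ℝ), ν (closedBall x R) ≠ ∞ := by
    intro x R
    rw [hν, withDensity_apply _ measurableSet_closedBall]
    exact hΦloc _ (isCompact_closedBall x R)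
  -- choice of a base scale
  obtain ⟨t₀, ht₀, ht₀D⟩ : ∃ t₀ : ℝ, 0 < t₀ ∧
      ENNReal.ofReal (4 * t₀) < EMetric.diam (Set.univ : Set X) := by
    rcases eq_or_ne (EMetric.diam (Set.univ : Set X)) ∞ with hDtop | hDtop
    · exact ⟨1, one_pos, by rw [hDtop]; exact ENNReal.ofReal_lt_top⟩
    · refine ⟨(EMetric.diam (Set.univ : Set X)).toReal / 8, ?_, ?_⟩
      · have := ENNReal.toReal_pos hD0 hDtop
        positivity
      · have h1 : (0:ℝ) < (EMetric.diam (Set.univ : Set X)).toReal :=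
          ENNReal.toReal_pos hD0 hDtop
        have heq : 4 * ((EMetric.diam (Set.univ : Set X)).toReal / 8)
            = (EMetric.diam (Set.univ : Set X)).toReal / 2 := by ring
        rw [heq]
        calc ENNReal.ofReal ((EMetric.diam (Set.univ : Set X)).toReal / 2)
            < ENNReal.ofReal ((EMetric.diam (Set.univ : Set X)).toReal) := by
              rw [ENNReal.ofReal_lt_ofReal_iff h1]
              linarith
          _ = EMetric.diam (Set.univ : Set X) := ENNReal.ofReal_toReal hDtop
  -- the key bound for sets inside an open set
  have hK₀0 : K₀ ≠ 0 := by
    rw [hK₀]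
    refine mul_ne_zero h7pos.ne' (mul_ne_zero ?_ ?_)
    · refine pow_ne_zero _ ?_
      rw [Ne, ENNReal.ofReal_eq_zero, not_le]
      linarith
    · exact pow_ne_zero _ (by norm_num)
  have hbound : ∀ (A U : Set X), IsOpen U → A ⊆ U →
      μH[Q] ((fun x => (x, f x)) '' A) ≤ K₀ * ∫⁻ x in U, Φ x ∂μ := by
    intro A U hUopen hAU
    by_cases hIU : (∫⁻ x in U, Φ x ∂μ) = ∞
    · rw [hIU, ENNReal.mul_top hK₀0]
      exact le_top
    set An : ℕ → Set X := fun n => {x ∈ A | ball x (5 * (t₀ / (n+1))) ⊆ U} with hAn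
    have hAnmono : Monotone An := by
      intro n n' hnn' x hx
      refine ⟨hx.1, fun y hy => hx.2 ?_⟩
      refine Set.mem_of_subset_of_mem (ball_subset_ball ?_) hy
      have h1 : (0:ℝ) < (n:ℝ)+1 := by positivity
      have h2 : (0:ℝ) < (n':ℝ)+1 := by positivity
      have h3 : ((n:ℝ)+1) ≤ ((n':ℝ)+1) := by
        have : (n:ℝ) ≤ (n':ℝ) := by exact_mod_cast hnn'
        linarith
      have := div_le_div_of_nonneg_left ht₀.le h1 h3
      nlinarith [div_le_div_of_nonneg_left ht₀.le h1 h3]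
    have hAcup : A = ⋃ n, An n := by
      apply Set.Subset.antisymm
      · intro x hx
        obtain ⟨ρ, hρ, hball⟩ := Metric.isOpen_iff.1 hUopen x (hAU hx)
        obtain ⟨n, hn⟩ := exists_nat_gt (5 * t₀ / ρ)
        refine Set.mem_iUnion.2 ⟨n, hx, fun y hy => hball ?_⟩
        refine Set.mem_of_subset_of_mem (ball_subset_ball ?_) hy
        rw [div_lt_iff₀ hρ] at hn
        have hcan : t₀ / ((n:ℝ)+1) * ((n:ℝ)+1) = t₀ := div_mul_cancel₀ _ (by positivity)
        have hwn : (0:ℝ) ≤ t₀ / ((n:ℝ)+1) := by positivity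
        nlinarith [hcan, hwn, hρ, hn]
      · exact Set.iUnion_subset fun n => Set.sep_subset _ _
    have hAnbound : ∀ n, μH[Q] ((fun x => (x, f x)) '' An n) ≤ K₀ * ∫⁻ x in U, Φ x ∂μ := by
      intro n
      refine ENNReal.le_of_forall_pos_le_add fun ε' hε' _ => ?_
      set εs : ℝ≥0∞ := (ε' : ℝ≥0∞) * ((7:ℝ≥0∞) ^ (m:ℝ))⁻¹ with hεs
      have hεs0 : 0 < εs := by
        rw [hεs]
        exact ENNReal.mul_pos (by exact_mod_cast hε'.ne') (ENNReal.inv_ne_zero.2 h7top)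
      have h7εs : (7:ℝ≥0∞) ^ (m:ℝ) * εs ≤ (ε' : ℝ≥0∞) := by
        rw [hεs, ← mul_assoc, mul_comm ((7:ℝ≥0∞) ^ (m:ℝ)) (ε' : ℝ≥0∞), mul_assoc,
          ENNReal.mul_inv_cancel h7pos.ne' h7top, mul_one]
      rw [Measure.hausdorffMeasure_apply]
      refine iSup₂_le fun r hr => ?_
      obtain ⟨r', hr'pos, hr'le⟩ : ∃ r' : ℝ, 0 < r' ∧ ENNReal.ofReal r' ≤ r := by
        rcases eq_or_ne r ∞ with hrtop | hrtop
        · exact ⟨1, one_pos, by rw [hrtop]; exact le_top⟩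
        · exact ⟨r.toReal, ENNReal.toReal_pos hr.ne' hrtop,
            (ENNReal.ofReal_toReal hrtop).le⟩
      set t : ℝ := min (t₀ / (n+1)) (min t₀ (r'/2)) with htdef
      have ht : 0 < t := by
        rw [htdef]
        refine lt_min (by positivity) (lt_min ht₀ (by positivity))
      have htt₀ : t ≤ t₀ := le_trans (min_le_right _ _) (min_le_left _ _)
      have htD : ENNReal.ofReal (4 * t) < EMetric.diam (Set.univ : Set X) :=
        lt_of_le_of_lt (ENNReal.ofReal_le_ofReal (by linarith)) ht₀D
      have hmargin : ∀ x ∈ An n, ball x (5 * t) ⊆ U := by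
        intro x hx
        refine le_trans (ball_subset_ball ?_) hx.2
        have : t ≤ t₀ / (n+1) := min_le_left _ _
        linarith
      obtain ⟨T, hTc, hTd, hTs⟩ := global_cover μ hpos Cμ hdoub m hm1 hmQ f hf Φ hΦmeas hyp
        (An n) U hUopen.measurableSet t ht htD hmargin εs hεs0
      have hTd' : ∀ k, EMetric.diam (T k) ≤ r := by
        intro k
        refine le_trans (hTd k) (le_trans (ENNReal.ofReal_le_ofReal ?_) hr'le)
        have : t ≤ r'/2 := le_trans (min_le_right _ _) (min_le_right _ _)
        linarith
      refine le_trans (iInf_le_of_le T (iInf_le_of_le hTc (iInf_le_of_le hTd' le_rfl))) ?_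
      refine le_trans (ENNReal.tsum_le_tsum (fun k => ?_)) (le_trans hTs ?_)
      · exact iSup_le fun _ => le_rfl
      · rw [hK₀, mul_assoc]
        exact add_le_add le_rfl h7εs
    rw [hAcup, Set.image_iUnion]
    rw [Directed.measure_iUnion]
    · exact iSup_le hAnbound
    · intro n n'
      rcases le_total n n' with h | h
      · exact ⟨n', Set.image_mono (hAnmono h), le_rfl⟩
      · exact ⟨n, le_rfl, Set.image_mono (hAnmono h)⟩
  -- conclude for measurable sets
  intro E hE
  by_cases hIE : (∫⁻ x in E, Φ x ∂μ) = ∞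
  · rw [hIE, ENNReal.mul_top hCC0.ne']
    exact le_top
  have hνE : ν E = ∫⁻ x in E, Φ x ∂μ := withDensity_apply Φ hE
  set Ei : ℕ → Set X := fun i => E ∩ ball x₀ (i+1) with hEi
  have hEimeas : ∀ i, MeasurableSet (Ei i) := fun i => hE.inter measurableSet_ball
  have hEimono : Monotone Ei := by
    intro i i' hii'
    refine Set.inter_subset_inter_right _ (ball_subset_ball ?_)
    have : (i:ℝ) ≤ (i':ℝ) := by exact_mod_cast hii'
    linarith
  have hEicup : E = ⋃ i, Ei i := by
    apply Set.Subset.antisymm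
    · intro x hx
      obtain ⟨i, hi⟩ := exists_nat_gt (dist x x₀)
      exact Set.mem_iUnion.2 ⟨i, hx, mem_ball.2 (by linarith)⟩
    · exact Set.iUnion_subset fun i => Set.inter_subset_left
  have hEibound : ∀ i, μH[Q] ((fun x => (x, f x)) '' Ei i) ≤ K₀ * ν E := by
    intro i
    refine ENNReal.le_of_forall_pos_le_add fun ε'' hε'' hfin => ?_
    set νi : Measure X := ν.restrict (ball x₀ (i+2)) with hνi
    haveI : IsFiniteMeasure νi := by
      constructor
      rw [hνi, Measure.restrict_apply_univ]
      exact lt_of_le_of_lt (measure_mono ball_subset_closedBall)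
        (lt_top_iff_ne_top.2 (hνcb x₀ (i+2)))
    set δ : ℝ≥0∞ := (ε'' : ℝ≥0∞) * CC⁻¹ with hδ
    have hδ0 : δ ≠ 0 := by
      rw [hδ]
      exact (ENNReal.mul_pos (by exact_mod_cast hε''.ne') (ENNReal.inv_ne_zero.2 hCCtop)).ne'
    have hνiEi : νi (Ei i) ≠ ∞ := (measure_lt_top νi _).ne
    obtain ⟨U', hU'sup, hU'open, hU'lt⟩ :=
      Set.exists_isOpen_lt_of_lt (Ei i) (νi (Ei i) + δ)
        (ENNReal.lt_add_right hνiEi hδ0)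
    set U : Set X := U' ∩ ball x₀ (i+2) with hU
    have hUopen : IsOpen U := hU'open.inter isOpen_ball
    have hEiU : Ei i ⊆ U := by
      refine Set.subset_inter hU'sup ?_
      refine le_trans (Set.inter_subset_right) (ball_subset_ball ?_)
      linarith
    have h1 : μH[Q] ((fun x => (x, f x)) '' Ei i) ≤ K₀ * ∫⁻ x in U, Φ x ∂μ :=
      hbound (Ei i) U hUopen hEiU
    have h2 : (∫⁻ x in U, Φ x ∂μ) = νi U' := by
      rw [← withDensity_apply Φ (hUopen.measurableSet), ← hν, hνi,
        Measure.restrict_apply hU'open.measurableSet]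
    have h3 : νi (Ei i) ≤ ν E := by
      rw [hνi, Measure.restrict_apply (hEimeas i)]
      refine measure_mono ?_
      refine le_trans Set.inter_subset_left ?_
      rw [hEi]
      exact Set.inter_subset_left
    have hCCδ : K₀ * δ ≤ (ε'' : ℝ≥0∞) := by
      rw [hδ, ← mul_assoc, mul_comm K₀ (ε'' : ℝ≥0∞), mul_assoc]
      calc (ε'' : ℝ≥0∞) * (K₀ * CC⁻¹) ≤ (ε'' : ℝ≥0∞) * (CC * CC⁻¹) := by
            refine mul_le_mul' le_rfl (mul_le_mul' ?_ le_rfl)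
            rw [hCC]; exact le_self_add
        _ = (ε'' : ℝ≥0∞) * 1 := by
            rw [ENNReal.mul_inv_cancel hCC0.ne' hCCtop]
        _ = (ε'' : ℝ≥0∞) := mul_one _
    calc μH[Q] ((fun x => (x, f x)) '' Ei i) ≤ K₀ * νi U' := by rw [← h2]; exact h1
      _ ≤ K₀ * (νi (Ei i) + δ) := mul_le_mul' le_rfl hU'lt.le
      _ = K₀ * νi (Ei i) + K₀ * δ := mul_add _ _ _
      _ ≤ K₀ * ν E + (ε'' : ℝ≥0∞) := add_le_add (mul_le_mul' le_rfl h3) hCCδ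
  have hfin : μH[Q] ((fun x => (x, f x)) '' E) ≤ K₀ * ν E := by
    have himg : (fun x => (x, f x)) '' E = ⋃ i, (fun x => (x, f x)) '' Ei i := by
      rw [← Set.image_iUnion, ← hEicup]
    rw [himg, Directed.measure_iUnion]
    · exact iSup_le hEibound
    · intro i i'
      rcases le_total i i' with h | h
      · exact ⟨i', Set.image_mono (hEimono h), le_rfl⟩
      · exact ⟨i, le_rfl, Set.image_mono (hEimono h)⟩
  calc μH[Q] ((fun x => (x, f x)) '' E) ≤ K₀ * ν E := hfin
    _ ≤ CC * ∫⁻ x in E, Φ x ∂μ := by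
      rw [hνE]
      exact mul_le_mul' (by rw [hCC]; exact le_self_add) le_rfl
end

section
/- If X is a metric measure space whose mapping u : X → ℝ^m has graph mapping ū(x) = (x,u(x)) satisfying Luzin's condition (N_Q) on X × ℝ^m, then u satisfies the (Q−m)-coarea property: for every set E ⊆ X with μ(E) = 0, H^{Q−m}(E ∩ u^{-1}(y)) = 0 for H^m-almost every y ∈ ℝ^m. -/
open MeasureTheory Metric Set ENNReal

/-- Infimum over countable covers of `s` by sets of diameter at most `r` of the sum of
`d`-th powers of diameters: the pre-measure appearing in the definition of Hausdorff
measure. -/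
noncomputable def auxInf {Y : Type*} [EMetricSpace Y] (d : ℝ) (r : ℝ≥0∞) (s : Set Y) : ℝ≥0∞ :=
  ⨅ (t : ℕ → Set Y) (_ : s ⊆ ⋃ n, t n) (_ : ∀ n, EMetric.diam (t n) ≤ r),
    ∑' n, ⨆ _ : (t n).Nonempty, EMetric.diam (t n) ^ d

lemma auxRepr {Y : Type*} [EMetricSpace Y] [MeasurableSpace Y] [BorelSpace Y] (d : ℝ)
    (s : Set Y) : μH[d] s = ⨆ (r : ℝ≥0∞) (_ : 0 < r), auxInf d r s :=
  MeasureTheory.Measure.hausdorffMeasure_apply d s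

lemma auxInf_anti {Y : Type*} [EMetricSpace Y] (d : ℝ) {r r' : ℝ≥0∞} (h : r' ≤ r) (s : Set Y) :
    auxInf d r s ≤ auxInf d r' s := by
  refine le_iInf fun t => le_iInf fun h1 => le_iInf fun h2 => ?_
  exact iInf_le_of_le t (iInf_le_of_le h1 (iInf_le_of_le (fun i => (h2 i).trans h) le_rfl))

lemma auxInf_le_tsum {Y : Type*} [EMetricSpace Y] (d : ℝ) (r : ℝ≥0∞) (s : Set Y)
    (t : ℕ → Set Y) (h1 : s ⊆ ⋃ n, t n) (h2 : ∀ n, EMetric.diam (t n) ≤ r) :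
    auxInf d r s ≤ ∑' n, ⨆ _ : (t n).Nonempty, EMetric.diam (t n) ^ d :=
  iInf_le_of_le t (iInf_le_of_le h1 (iInf_le_of_le h2 le_rfl))

lemma auxInf_le_hausdorff {Y : Type*} [EMetricSpace Y] [MeasurableSpace Y] [BorelSpace Y]
    (d : ℝ) {r : ℝ≥0∞} (hr : 0 < r) (s : Set Y) : auxInf d r s ≤ μH[d] s := by
  rw [auxRepr]
  exact le_iSup₂ (f := fun r (_ : 0 < r) => auxInf d r s) r hr

lemma exists_cover {Y : Type*} [EMetricSpace Y] [MeasurableSpace Y] [BorelSpace Y] (d : ℝ)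
    (s : Set Y) (h : μH[d] s = 0) {r ε : ℝ≥0∞} (hr : 0 < r) (hε : 0 < ε) :
    ∃ t : ℕ → Set Y, s ⊆ ⋃ i, t i ∧ (∀ i, EMetric.diam (t i) ≤ r) ∧
      ∑' i, ⨆ _ : (t i).Nonempty, EMetric.diam (t i) ^ d < ε := by
  have h1 : auxInf d r s < ε :=
    lt_of_le_of_lt ((auxInf_le_hausdorff d hr s).trans h.le) hε
  obtain ⟨t, h2⟩ := iInf_lt_iff.mp h1
  obtain ⟨hcov, h3⟩ := iInf_lt_iff.mp h2
  obtain ⟨hdiam, h4⟩ := iInf_lt_iff.mp h3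
  exact ⟨t, hcov, hdiam, h4⟩

lemma hausdorff_ne_zero_extract {Y : Type*} [EMetricSpace Y] [MeasurableSpace Y] [BorelSpace Y]
    (d : ℝ) (s : Set Y) (h : μH[d] s ≠ 0) :
    ∃ n k : ℕ, ((k : ℝ≥0∞) + 1)⁻¹ ≤ auxInf d ((n : ℝ≥0∞) + 1)⁻¹ s := by
  have hex : ∃ r : ℝ≥0∞, 0 < r ∧ auxInf d r s ≠ 0 := by
    by_contra hc
    push_neg at hc
    apply h
    rw [auxRepr]
    exact ENNReal.iSup_eq_zero.mpr fun r => ENNReal.iSup_eq_zero.mpr fun hr => hc r hr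
  obtain ⟨r, hr0, hrne⟩ := hex
  obtain ⟨n, hn⟩ := ENNReal.exists_inv_nat_lt hr0.ne'
  have hle : ((n : ℝ≥0∞) + 1)⁻¹ ≤ r := by
    refine le_trans ?_ hn.le
    exact ENNReal.inv_le_inv.mpr (le_add_right le_rfl)
  have h2 : auxInf d ((n : ℝ≥0∞) + 1)⁻¹ s ≠ 0 := fun hz =>
    hrne (le_antisymm (hz ▸ auxInf_anti d hle s) zero_le)
  obtain ⟨k, hk⟩ := ENNReal.exists_inv_nat_lt h2
  refine ⟨n, k, le_trans ?_ hk.le⟩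
  exact ENNReal.inv_le_inv.mpr (le_add_right le_rfl)

lemma aux_rpow_mul_le {Q : ℝ} {m : ℕ} (hm : (m : ℝ) ≤ Q) (x : ℝ≥0∞) (hx : x ≠ ∞) :
    x ^ (Q - (m : ℝ)) * x ^ (m : ℝ) ≤ x ^ Q := by
  rcases eq_or_ne x 0 with h0 | h0
  · rcases Nat.eq_zero_or_pos m with hm0 | hm0
    · subst hm0
      simp
    · have hmpos : (0 : ℝ) < m := by exact_mod_cast hm0
      rw [h0, ENNReal.zero_rpow_of_pos hmpos, mul_zero]
      exact zero_le
  · rw [← ENNReal.rpow_add _ _ h0 hx, sub_add_cancel]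

/-- if the graph mapping ū(x) = (x, u(x)) of u : X → ℝ^m satisfies Luzin's
condition (N_Q) on X × ℝ^m, then u has the (Q−m)-coarea property: for every μ-null set
E ⊆ X, H^{Q−m}(E ∩ u⁻¹(y)) = 0 for H^m-a.e. y ∈ ℝ^m. -/
theorem stmt_9 {X : Type*} [MetricSpace X] [SecondCountableTopology X]
    [MeasurableSpace X] [BorelSpace X]
    (μ : Measure X) (Q : ℝ) (m : ℕ) (hm : (m : ℝ) ≤ Q)
    (u : X → (Fin m → ℝ))
    (hN : ∀ E : Set X, μ E = 0 → μH[Q] ((fun x => (x, u x)) '' E) = 0) :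
    ∀ E : Set X, μ E = 0 →
      ∀ᵐ y ∂(μH[(m : ℝ)] : Measure (Fin m → ℝ)),
        μH[Q - (m : ℝ)] (E ∩ u ⁻¹' {y}) = 0 := by
  intro E hE
  have hQm : (0 : ℝ) ≤ Q - m := sub_nonneg.mpr hm
  set A : Set (X × (Fin m → ℝ)) := (fun x => (x, u x)) '' E with hAdef
  have hAQ : μH[Q] A = 0 := hN E hE
  set M : ℕ → ℕ → Set (Fin m → ℝ) := fun n k =>
    {y | ((k : ℝ≥0∞) + 1)⁻¹ ≤ auxInf (Q - (m : ℝ)) ((n : ℝ≥0∞) + 1)⁻¹ (E ∩ u ⁻¹' {y})}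
    with hMdef
  have hMnull : ∀ n k, (μH[(m : ℝ)] : Measure (Fin m → ℝ)) (M n k) = 0 := by
    intro n k
    set r0 : ℝ≥0∞ := ((n : ℝ≥0∞) + 1)⁻¹ with hr0def
    set δ : ℝ≥0∞ := ((k : ℝ≥0∞) + 1)⁻¹ with hδdef
    have hr0pos : 0 < r0 := ENNReal.inv_pos.mpr (by simp)
    have hr0top : r0 ≠ ∞ := ENNReal.inv_ne_top.mpr (by simp)
    have hδ0 : δ ≠ 0 := ENNReal.inv_ne_zero.mpr (by simp)
    have hδtop : δ ≠ ∞ := ENNReal.inv_ne_top.mpr (by simp)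
    have key : ∀ ε : ℝ≥0∞, 0 < ε → (μH[(m : ℝ)] : Measure (Fin m → ℝ)) (M n k) ≤ ε := by
      intro ε hε
      have hε'pos : 0 < ε * δ := by
        refine ENNReal.mul_pos hε.ne' hδ0
      obtain ⟨t, hcov, hdiam, hsum⟩ := exists_cover Q A hAQ hr0pos hε'pos
      -- projected covers
      set s : ℕ → (Fin m → ℝ) → Set X := fun i y =>
        Prod.fst '' (t i ∩ A ∩ Prod.snd ⁻¹' {y}) with hsdef
      set B : ℕ → Set (Fin m → ℝ) := fun i => closure (Prod.snd '' t i) with hBdef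
      set G : (Fin m → ℝ) → ℝ≥0∞ := fun y =>
        ∑' i, (B i).indicator (fun _ => EMetric.diam (t i) ^ (Q - (m : ℝ))) y with hGdef
      have hGmeas : Measurable G :=
        Measurable.ennreal_tsum fun i =>
          measurable_const.indicator isClosed_closure.measurableSet
      have hds : ∀ i y, EMetric.diam (s i y) ≤ EMetric.diam (t i) := by
        intro i y
        calc EMetric.diam (s i y)
            ≤ 1 * EMetric.diam (t i ∩ A ∩ Prod.snd ⁻¹' {y}) :=
              LipschitzWith.prod_fst.ediam_image_le _
          _ = EMetric.diam (t i ∩ A ∩ Prod.snd ⁻¹' {y}) := one_mul _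
          _ ≤ EMetric.diam (t i) :=
              EMetric.diam_mono (inter_subset_left.trans inter_subset_left)
      have hMG : M n k ⊆ {y | δ ≤ G y} := by
        intro y hy
        simp only [hMdef, mem_setOf_eq] at hy
        refine le_trans hy (le_trans (auxInf_le_tsum _ _ _ (fun i => s i y) ?_ ?_) ?_)
        · intro x hx
          have hxA : (x, u x) ∈ A := ⟨x, hx.1, rfl⟩
          obtain ⟨i, hi⟩ := mem_iUnion.mp (hcov hxA)
          refine mem_iUnion.mpr ⟨i, ⟨(x, u x), ⟨⟨hi, hxA⟩, ?_⟩, rfl⟩⟩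
          simpa using hx.2
        · exact fun i => (hds i y).trans (hdiam i)
        · -- sum over projected cover ≤ G y
          refine ENNReal.tsum_le_tsum fun i => ?_
          refine iSup_le fun hne => ?_
          obtain ⟨x, hx⟩ := hne
          obtain ⟨p, hp, rfl⟩ := hx
          have hpy : p.2 = y := by simpa using hp.2
          have hyB : y ∈ B i := subset_closure ⟨p, hp.1.1, hpy⟩
          rw [indicator_of_mem hyB]
          exact ENNReal.rpow_le_rpow (hds i y) hQm
      have hGint : ∫⁻ y, G y ∂(μH[(m : ℝ)] : Measure (Fin m → ℝ)) ≤ ε * δ := by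
        rw [hGdef, lintegral_tsum fun i =>
          (measurable_const.indicator isClosed_closure.measurableSet).aemeasurable]
        refine le_trans ?_ hsum.le
        refine ENNReal.tsum_le_tsum fun i => ?_
        rw [lintegral_indicator_const isClosed_closure.measurableSet]
        rcases (t i).eq_empty_or_nonempty with hte | hte
        · simp [hBdef, hte]
        · rw [iSup_pos hte]
          have hdB : EMetric.diam (B i) ≤ EMetric.diam (t i) := by
            rw [hBdef]
            refine (Metric.ediam_closure _).trans_le ?_
            calc EMetric.diam (Prod.snd '' t i) ≤ 1 * EMetric.diam (t i) :=
                LipschitzWith.prod_snd.ediam_image_le _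
              _ = EMetric.diam (t i) := one_mul _
          have hμB : (μH[(m : ℝ)] : Measure (Fin m → ℝ)) (B i)
              ≤ EMetric.diam (t i) ^ (m : ℝ) := by
            have hvol : (μH[(m : ℝ)] : Measure (Fin m → ℝ)) = volume := by
              have h := hausdorffMeasure_pi_real (ι := Fin m)
              rwa [Fintype.card_fin] at h
            rw [hvol]
            calc volume (B i) ≤ EMetric.diam (B i) ^ Fintype.card (Fin m) :=
                Real.volume_pi_le_diam_pow _
              _ = EMetric.diam (B i) ^ (m : ℝ) := by
                  rw [← ENNReal.rpow_natCast, Fintype.card_fin]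
              _ ≤ EMetric.diam (t i) ^ (m : ℝ) :=
                  ENNReal.rpow_le_rpow hdB (Nat.cast_nonneg m)
          calc EMetric.diam (t i) ^ (Q - (m : ℝ)) * (μH[(m : ℝ)] : Measure (Fin m → ℝ)) (B i)
              ≤ EMetric.diam (t i) ^ (Q - (m : ℝ)) * EMetric.diam (t i) ^ (m : ℝ) :=
                mul_le_mul_right hμB _
            _ ≤ EMetric.diam (t i) ^ Q :=
                aux_rpow_mul_le hm _ ((hdiam i).trans_lt hr0top.lt_top).ne
      calc (μH[(m : ℝ)] : Measure (Fin m → ℝ)) (M n k)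
          ≤ (μH[(m : ℝ)] : Measure (Fin m → ℝ)) {y | δ ≤ G y} := measure_mono hMG
        _ ≤ (∫⁻ y, G y ∂(μH[(m : ℝ)] : Measure (Fin m → ℝ))) / δ :=
            meas_ge_le_lintegral_div hGmeas.aemeasurable hδ0 hδtop
        _ ≤ ε * δ / δ := ENNReal.div_le_div_right hGint _
        _ = ε := by
            rw [div_eq_mul_inv, mul_assoc, ENNReal.mul_inv_cancel hδ0 hδtop, mul_one]
    -- conclude measure zero from the ∀ ε bound
    by_contra hne
    have h1 := key 1 one_pos
    have hfin : (μH[(m : ℝ)] : Measure (Fin m → ℝ)) (M n k) ≠ ∞ :=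
      (h1.trans_lt one_lt_top).ne
    have h2 := key ((μH[(m : ℝ)] : Measure (Fin m → ℝ)) (M n k) / 2)
      (ENNReal.half_pos hne)
    exact absurd h2 (not_le.mpr (ENNReal.half_lt_self hne hfin))
  rw [ae_iff]
  refine measure_mono_null ?_
    (measure_iUnion_null fun n => measure_iUnion_null fun k => hMnull n k)
  intro y hy
  simp only [mem_setOf_eq] at hy
  obtain ⟨n, k, hnk⟩ := hausdorff_ne_zero_extract (Q - (m : ℝ)) (E ∩ u ⁻¹' {y}) hy
  exact mem_iUnion.mpr ⟨n, mem_iUnion.mpr ⟨k, hnk⟩⟩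
end

section
/- If S ⊆ X is countably H^n-rectifiable (n an integer), u : X → ℝ^m satisfies the (n−m)-coarea property (μ-null sets E satisfy H^{n−m}(E ∩ u^{-1}(y)) = 0 for H^m-a.e. y) and u agrees with Lipschitz functions φ_i : X → ℝ^m off sets E_i of measure μ(X \ E_i) < 2^{-i} with ∪E_i of full measure, and if for each Lipschitz φ_i the level-set slices S ∩ φ_i^{-1}(y) are countably H^{n−m}-rectifiable for H^m-a.e. y, then S ∩ u^{-1}(y) is countably H^{n−m}-rectifiable for H^m-a.e. y ∈ ℝ^m. -/
open MeasureTheory Metric Set ENNReal NNReal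

/-- A set S in a metric space X is countably H^n-rectifiable if it is covered, up to an
H^n-null set, by countably many Lipschitz images of subsets of ℝ^n. -/
def CountablyRect {X : Type*} [MetricSpace X] [MeasurableSpace X] [BorelSpace X]
    (n : ℕ) (S : Set X) : Prop :=
  ∃ (A : ℕ → Set (Fin n → ℝ)) (φ : ℕ → (Fin n → ℝ) → X),
    (∀ i, ∃ L : ℝ≥0, LipschitzOnWith L (φ i) (A i)) ∧
    μH[(n : ℝ)] (S \ ⋃ i, φ i '' A i) = 0

lemma rect_mono {X : Type*} [MetricSpace X] [MeasurableSpace X] [BorelSpace X]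
    {k : ℕ} {S T : Set X} (h : T ⊆ S) (hS : CountablyRect k S) : CountablyRect k T := by
  obtain ⟨A, φ, hlip, hnull⟩ := hS
  exact ⟨A, φ, hlip, measure_mono_null (diff_subset_diff_left h) hnull⟩

lemma rect_union_null {X : Type*} [MetricSpace X] [MeasurableSpace X] [BorelSpace X]
    {k : ℕ} {S T : Set X} (hS : CountablyRect k S)
    (hT : μH[(k : ℝ)] T = 0) : CountablyRect k (S ∪ T) := by
  obtain ⟨A, φ, hlip, hnull⟩ := hS
  refine ⟨A, φ, hlip, ?_⟩
  rw [union_diff_distrib]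
  exact measure_union_null hnull (measure_mono_null diff_subset hT)

lemma rect_iUnion {X : Type*} [MetricSpace X] [MeasurableSpace X] [BorelSpace X]
    {k : ℕ} {S : ℕ → Set X} (h : ∀ i, CountablyRect k (S i)) :
    CountablyRect k (⋃ i, S i) := by
  choose A φ hlip hnull using h
  set e : ℕ ≃ ℕ × ℕ := (Denumerable.eqv (ℕ × ℕ)).symm with he
  refine ⟨fun j => A (e j).1 (e j).2, fun j => φ (e j).1 (e j).2, fun j => hlip _ _, ?_⟩
  have hsub : (⋃ i, S i) \ (⋃ j, φ (e j).1 (e j).2 '' A (e j).1 (e j).2) ⊆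
      ⋃ i, (S i \ ⋃ l, φ i l '' A i l) := by
    rintro x ⟨hx, hx2⟩
    obtain ⟨i, hi⟩ := mem_iUnion.1 hx
    refine mem_iUnion.2 ⟨i, hi, fun hmem => hx2 ?_⟩
    obtain ⟨l, hl⟩ := mem_iUnion.1 hmem
    refine mem_iUnion.2 ⟨e.symm (i, l), ?_⟩
    simpa using hl
  exact measure_mono_null hsub (by rw [measure_iUnion_null_iff]; exact hnull)

/-- if S is countably H^n-rectifiable, u : X → ℝ^m has the (n−m)-coarea
property, u agrees with Lipschitz maps φ_i off sets of measure < 2^{-i} whose union has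
full measure, and the slices S ∩ φ_i⁻¹(y) are countably H^{n−m}-rectifiable for
H^m-a.e. y, then S ∩ u⁻¹(y) is countably H^{n−m}-rectifiable for H^m-a.e. y ∈ ℝ^m. -/
theorem stmt_19 {X : Type*} [MetricSpace X] [MeasurableSpace X] [BorelSpace X]
    (μ : Measure X) (n m : ℕ) (hmn : m ≤ n)
    (S : Set X) (hS : MeasurableSet S) (hSrect : CountablyRect n S)
    (u : X → (Fin m → ℝ))
    (hcoarea : ∀ E : Set X, μ E = 0 →
      ∀ᵐ y ∂(μH[(m : ℝ)] : Measure (Fin m → ℝ)),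
        μH[((n - m : ℕ) : ℝ)] (E ∩ u ⁻¹' {y}) = 0)
    (φ : ℕ → X → (Fin m → ℝ)) (hφ : ∀ i, ∃ L : ℝ≥0, LipschitzWith L (φ i))
    (E : ℕ → Set X) (hagree : ∀ i, Set.EqOn u (φ i) (E i))
    (hsmall : ∀ i, μ (E i)ᶜ < (1 / 2 : ℝ≥0∞) ^ i)
    (hfull : μ (⋃ i, E i)ᶜ = 0)
    (hslices : ∀ i, ∀ᵐ y ∂(μH[(m : ℝ)] : Measure (Fin m → ℝ)),
      CountablyRect (n - m) (S ∩ (φ i) ⁻¹' {y})) :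
    ∀ᵐ y ∂(μH[(m : ℝ)] : Measure (Fin m → ℝ)),
      CountablyRect (n - m) (S ∩ u ⁻¹' {y}) := by
  filter_upwards [hcoarea _ hfull, ae_all_iff.2 hslices] with y hy hslice
  have hsub : S ∩ u ⁻¹' {y} ⊆
      (⋃ i, S ∩ (φ i) ⁻¹' {y}) ∪ ((⋃ i, E i)ᶜ ∩ u ⁻¹' {y}) := by
    rintro x ⟨hxS, hxu⟩
    by_cases hx : x ∈ ⋃ i, E i
    · obtain ⟨i, hi⟩ := mem_iUnion.1 hx
      exact Or.inl (mem_iUnion.2 ⟨i, hxS, by simp [← hagree i hi, hxu.out]⟩)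
    · exact Or.inr ⟨hx, hxu⟩
  exact rect_mono hsub (rect_union_null (rect_iUnion hslice) hy)
end
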